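/- arXiv:2504.14916 — 6 statements merged into one kernel-verified Lean document; each statement's English description precedes it below -/
import Mathlib

section
/- Let Γ be a finite connected simple graph and R an equivalence relation on the vertex set of Γ, with equivalence classes C_1, …, C_k of sizes n_1, …, n_k. Then: (a) any two vertices lying in the same class C_i have the same degree in the R-super Γ graph Γ^R, say d_i; and (b) the Sombor characteristic polynomial of Γ^R equals χ(N, x) · ∏_{i=1}^{k} (x + d_i·√2)^{ n_i − 1 }, where N is the k×k real matrix whose (i,i) entry is (n_i − 1)·d_i·√2 and whose (i,j) entry for i ≠ j is n_j·√(d_i² + d_j²) if some vertex of C_i is adjacent in Γ^R to some vertex of C_j, and 0 otherwise, and χ(N, x) denotes the characteristic polynomial of N. -/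
open Polynomial
open scoped Classical

/-- Degree of a vertex. -/
noncomputable def sdeg {V : Type*} (G : SimpleGraph V) (v : V) : ℕ := {u | G.Adj v u}.ncard

/-- Sombor matrix of a graph. -/
noncomputable def somborMatrix {V : Type*} (G : SimpleGraph V) : Matrix V V ℝ :=
  Matrix.of fun u v =>
    if G.Adj u v then Real.sqrt ((sdeg G u : ℝ) ^ 2 + (sdeg G v : ℝ) ^ 2) else 0

/-- Sombor characteristic polynomial det(x·I − S(Γ)). -/
noncomputable def somborCharpoly {V : Type*} [Fintype V] [DecidableEq V] (G : SimpleGraph V) :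
    Polynomial ℝ :=
  (somborMatrix G).charpoly

noncomputable def rt2 : ℝ := Real.sqrt 2

/-- The `R`-super `Γ` graph. -/
def superGraph {V : Type*} (A : SimpleGraph V) (r : V → V → Prop) (hr : Equivalence r) :
    SimpleGraph V where
  Adj x y := x ≠ y ∧ (r x y ∨ ∃ x' y', r x x' ∧ r y y' ∧ A.Adj x' y')
  symm := by
    constructor
    rintro x y ⟨hxy, h | ⟨x', y', hx, hy, hadj⟩⟩
    · exact ⟨hxy.symm, Or.inl (hr.symm h)⟩
    · exact ⟨hxy.symm, Or.inr ⟨y', x', hy, hx, hadj.symm⟩⟩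
  loopless := by constructor; rintro x ⟨h, -⟩; exact h rfl

/-- Same-order relation. -/
def orderRel (G : Type*) [Monoid G] : G → G → Prop := fun x y => orderOf x = orderOf y

theorem orderRel_equivalence (G : Type*) [Monoid G] : Equivalence (orderRel G) :=
  ⟨fun _ => rfl, fun h => h.symm, fun h1 h2 => h1.trans h2⟩

/-- Conjugacy relation. -/
def conjRel (G : Type*) [Group G] : G → G → Prop := fun x y => ∃ a : G, x = a * y * a⁻¹

theorem conjRel_equivalence (G : Type*) [Group G] : Equivalence (conjRel G) := by
  constructor
  · intro x; exact ⟨1, by simp⟩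
  · rintro x y ⟨a, rfl⟩; exact ⟨a⁻¹, by group⟩
  · rintro x y z ⟨a, rfl⟩ ⟨b, rfl⟩; exact ⟨a * b, by group⟩

/-- Commuting graph. -/
def commutingGraph (G : Type*) [Group G] : SimpleGraph G where
  Adj x y := x ≠ y ∧ x * y = y * x
  symm := by constructor; rintro x y ⟨h, c⟩; exact ⟨h.symm, c.symm⟩
  loopless := by constructor; rintro x ⟨h, -⟩; exact h rfl

/-- Power graph. -/
def powerGraph (G : Type*) [Group G] : SimpleGraph G where
  Adj x y := x ≠ y ∧ (x ∈ Subgroup.zpowers y ∨ y ∈ Subgroup.zpowers x)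
  symm := by constructor; rintro x y ⟨h, c⟩; exact ⟨h.symm, c.symm⟩
  loopless := by constructor; rintro x ⟨h, -⟩; exact h rfl

/-- Enhanced power graph. -/
def enhancedPowerGraph (G : Type*) [Group G] : SimpleGraph G where
  Adj x y := x ≠ y ∧ ∃ z : G, x ∈ Subgroup.zpowers z ∧ y ∈ Subgroup.zpowers z
  symm := by constructor; rintro x y ⟨h, z, hx, hy⟩; exact ⟨h.symm, z, hy, hx⟩
  loopless := by constructor; rintro x ⟨h, -⟩; exact h rfl

/-!
In `Γ^R` every class is a clique and, for distinct vertices, adjacency depends only on their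
classes. Hence swapping two `R`-related vertices is an automorphism of `Γ^R`, which gives (a).
With `P` the `V × k` class-indicator matrix (`(1 : Matrix k k _).submatrix cls id`),
`S(Γ^R) = P M Pᵀ - diag (e ∘ cls)`, where `e i = d_i √2` and `M` has diagonal `e` and the
class-to-class Sombor weights off it. For `x + e i ≠ 0` one factors
`x I - S(Γ^R) = D (1 - P (D'⁻¹ M Pᵀ))` with `D = diag ((x + e) ∘ cls)` and `D' = diag (x + e)`,
swaps the factors by `det (1 - A B) = det (1 - B A)`, and uses `Pᵀ P = diag n`; this leaves
`det (x I - N) · ∏ (x + e i) ^ (n i - 1)` because `N = M diag n - diag e`.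
-/

namespace Matrix

open Finset

variable {V k : Type*} [DecidableEq k] (cls : V → k)

section CommRing

variable {R : Type*} [CommRing R]

theorem submatrix_eq_one_submatrix_mul_mul_transpose [Fintype V] [Fintype k]
    (M : Matrix k k R) :
    M.submatrix cls cls =
      (1 : Matrix k k R).submatrix cls id * M * ((1 : Matrix k k R).submatrix cls id)ᵀ := by
  ext u v
  simp [mul_apply, one_apply]

theorem transpose_one_submatrix_mul_one_submatrix [Fintype V] :
    ((1 : Matrix k k R).submatrix cls id)ᵀ * (1 : Matrix k k R).submatrix cls id =
      diagonal fun i => (#{v | cls v = i} : R) := by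
  ext i j
  rw [mul_apply, diagonal_apply, ← sum_boole]
  simp only [transpose_apply, submatrix_apply, id, one_apply, ite_zero_mul_ite_zero, mul_one]
  split_ifs with h
  · subst h; simp [eq_comm]
  · exact sum_eq_zero fun v _ => if_neg fun h' => h (h'.1.symm.trans h'.2)

theorem diagonal_comp_mul_one_submatrix [Fintype V] [Fintype k] [DecidableEq V] (g : k → R) :
    diagonal (g ∘ cls) * (1 : Matrix k k R).submatrix cls id =
      (1 : Matrix k k R).submatrix cls id * diagonal g := by
  ext u i
  by_cases h : cls u = i <;> simp [one_apply, h]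

theorem det_diagonal_comp [Fintype V] [DecidableEq V] [Fintype k] (g : k → R)
    (hcls : Function.Surjective cls) :
    (diagonal (g ∘ cls)).det = ∏ i, g i ^ #{v | cls v = i} := by
  rw [det_diagonal, Function.comp_def, Finset.prod_comp, image_univ_of_surjective hcls]

theorem scalar_sub_sub_diagonal {ι : Type*} [Fintype ι] [DecidableEq ι] (t : R)
    (N : Matrix ι ι R) (f : ι → R) :
    scalar ι t - (N - diagonal f) = diagonal (fun i => t + f i) - N := by
  rw [scalar_apply, sub_sub_eq_add_sub, diagonal_add]

end CommRing

variable {K : Type*} [Field K] [Fintype V] [DecidableEq V] [Fintype k]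

theorem det_diagonal_comp_sub_submatrix (hcls : Function.Surjective cls) (M : Matrix k k K)
    (g : k → K) (hg : ∀ i, g i ≠ 0) :
    (diagonal (g ∘ cls) - M.submatrix cls cls).det =
      (diagonal g - M * diagonal fun i => (#{v | cls v = i} : K)).det *
        ∏ i, g i ^ (#{v | cls v = i} - 1) := by
  rw [submatrix_eq_one_submatrix_mul_mul_transpose]
  set A := (1 : Matrix k k K).submatrix cls id
  have hA : diagonal (g ∘ cls) * A * diagonal g⁻¹ = A := by
    rw [diagonal_comp_mul_one_submatrix, Matrix.mul_assoc, diagonal_mul_diagonal]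
    simp [A, mul_inv_cancel₀ (hg _)]
  have hfactor : diagonal (g ∘ cls) - A * M * Aᵀ =
      diagonal (g ∘ cls) * (1 - A * (diagonal g⁻¹ * M * Aᵀ)) := by
    rw [Matrix.mul_sub, Matrix.mul_one]
    simp only [← Matrix.mul_assoc, hA]
  have hquot : diagonal g - M * diagonal (fun i => (#{v | cls v = i} : K)) =
      diagonal g * (1 - diagonal g⁻¹ * M * Aᵀ * A) := by
    rw [Matrix.mul_assoc _ Aᵀ, transpose_one_submatrix_mul_one_submatrix, Matrix.mul_sub,
      Matrix.mul_one, ← Matrix.mul_assoc, ← Matrix.mul_assoc, diagonal_mul_diagonal]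
    simp [mul_inv_cancel₀ (hg _)]
  have hpow : ∀ i, g i ^ #{v | cls v = i} = g i ^ (#{v | cls v = i} - 1) * g i := fun i => by
    rw [← pow_succ, Nat.sub_add_cancel]
    obtain ⟨v, rfl⟩ := hcls i
    exact card_pos.mpr ⟨v, by simp⟩
  rw [hfactor, det_mul, det_one_sub_mul_comm, hquot, det_mul, det_diagonal_comp _ _ hcls,
    det_diagonal, Finset.prod_congr rfl fun i _ => hpow i, prod_mul_distrib]
  ring

theorem charpoly_submatrix_sub_diagonal [Infinite K] (hcls : Function.Surjective cls)
    (M : Matrix k k K) (e : k → K) :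
    (M.submatrix cls cls - diagonal (e ∘ cls)).charpoly =
      (M * diagonal (fun i => (#{v | cls v = i} : K)) - diagonal e).charpoly *
        ∏ i, (X + C (e i)) ^ (#{v | cls v = i} - 1) := by
  refine eq_of_infinite_eval_eq _ _ ((Set.finite_range fun i => -e i).infinite_compl.mono ?_)
  intro t ht
  have hne : ∀ i, t + e i ≠ 0 := fun i h => ht ⟨i, by linear_combination -h⟩
  simp only [eval_charpoly, eval_mul, eval_prod, eval_pow, eval_add, eval_X, eval_C,
    scalar_sub_sub_diagonal]
  exact det_diagonal_comp_sub_submatrix cls hcls M _ hne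

end Matrix

theorem sdeg_iso {V W : Type*} {G : SimpleGraph V} {G' : SimpleGraph W} (f : G ≃g G') (v : V) :
    sdeg G' (f v) = sdeg G v := by
  simp only [sdeg, ← Nat.card_coe_set_eq]
  exact (Nat.card_congr (f.mapNeighborSet v)).symm

theorem Equivalence.swap_apply_rel {V : Type*} [DecidableEq V] {r : V → V → Prop}
    (hr : Equivalence r) {x y : V} (h : r x y) (a : V) : r (Equiv.swap x y a) a := by
  rcases eq_or_ne a x with rfl | hax
  · simpa using hr.symm h
  rcases eq_or_ne a y with rfl | hay
  · simpa using h
  · simpa [Equiv.swap_apply_of_ne_of_ne hax hay] using hr.refl a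

section SuperGraph

variable {V : Type*} {G : SimpleGraph V} {r : V → V → Prop} (hr : Equivalence r)

theorem superGraph_adj_of_rel {x y : V} (hxy : x ≠ y) (h : r x y) :
    (superGraph G r hr).Adj x y :=
  ⟨hxy, Or.inl h⟩

theorem superGraph_adj_congr {x y x' y' : V} (h : (superGraph G r hr).Adj x y) (hx : r x x')
    (hy : r y y') (hne : x' ≠ y') : (superGraph G r hr).Adj x' y' := by
  obtain ⟨-, hxy | ⟨a, b, hxa, hyb, hab⟩⟩ := h
  · exact ⟨hne, Or.inl (hr.trans (hr.trans (hr.symm hx) hxy) hy)⟩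
  · exact ⟨hne, Or.inr ⟨a, b, hr.trans (hr.symm hx) hxa, hr.trans (hr.symm hy) hyb, hab⟩⟩

variable [DecidableEq V]

def superGraphSwap {x y : V} (h : r x y) : superGraph G r hr ≃g superGraph G r hr where
  toEquiv := Equiv.swap x y
  map_rel_iff' {a b} := by
    refine ⟨fun hab => ?_, fun hab => ?_⟩
    · exact superGraph_adj_congr hr hab (hr.swap_apply_rel h a) (hr.swap_apply_rel h b)
        fun hab' => hab.ne (by simpa using hab')
    · exact superGraph_adj_congr hr hab (hr.symm (hr.swap_apply_rel h a))
        (hr.symm (hr.swap_apply_rel h b)) ((Equiv.swap x y).injective.ne hab.ne)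

theorem sdeg_superGraph_eq_of_rel {x y : V} (h : r x y) :
    sdeg (superGraph G r hr) x = sdeg (superGraph G r hr) y := by
  simpa [superGraphSwap] using (sdeg_iso (superGraphSwap hr h) x).symm

theorem somborMatrix_superGraph {k : Type*} [DecidableEq k] (cls : V → k)
    (hcls : ∀ u v, cls u = cls v ↔ r u v) (d : k → ℕ)
    (hd : ∀ v, sdeg (superGraph G r hr) v = d (cls v)) :
    somborMatrix (superGraph G r hr) =
      (Matrix.of fun i j : k => if i = j then (d i : ℝ) * rt2
        else if ∃ x y, cls x = i ∧ cls y = j ∧ (superGraph G r hr).Adj x y then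
          √((d i : ℝ) ^ 2 + (d j : ℝ) ^ 2)
        else 0).submatrix cls cls - Matrix.diagonal fun v => (d (cls v) : ℝ) * rt2 := by
  ext u v
  rcases eq_or_ne u v with rfl | huv
  · simp [somborMatrix]
  simp only [somborMatrix, Matrix.of_apply, Matrix.sub_apply, Matrix.submatrix_apply,
    Matrix.diagonal_apply_ne _ huv, sub_zero, hd]
  split_ifs with hadj hc hcadj hc hcadj
  · rw [hc, ← two_mul, Real.sqrt_mul zero_le_two, Real.sqrt_sq (Nat.cast_nonneg _), rt2,
      mul_comm]
  · rfl
  · exact absurd ⟨u, v, rfl, rfl, hadj⟩ hcadj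
  · exact absurd (superGraph_adj_of_rel hr huv ((hcls u v).mp hc)) hadj
  · obtain ⟨x, y, hx, hy, hxy⟩ := hcadj
    exact absurd (superGraph_adj_congr hr hxy ((hcls x u).mp hx) ((hcls y v).mp hy) huv) hadj
  · rfl

open Finset in
theorem somborCharpoly_superGraph [Fintype V] {k : Type*} [Fintype k] [DecidableEq k]
    (cls : V → k) (hcls : ∀ u v, cls u = cls v ↔ r u v) (hsurj : Function.Surjective cls)
    (d : k → ℕ)
    (hd : ∀ v, sdeg (superGraph G r hr) v = d (cls v)) :
    somborCharpoly (superGraph G r hr) =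
      (Matrix.of fun i j : k =>
          if i = j then ((#{v | cls v = i} : ℝ) - 1) * (d i : ℝ) * rt2
          else if ∃ x ∈ ({v | cls v = i} : Finset V), ∃ y ∈ ({v | cls v = j} : Finset V),
              (superGraph G r hr).Adj x y then
            (#{v | cls v = j} : ℝ) * √((d i : ℝ) ^ 2 + (d j : ℝ) ^ 2)
          else 0).charpoly *
        ∏ i, (X + C ((d i : ℝ) * rt2)) ^ (#{v | cls v = i} - 1) := by
  rw [somborCharpoly, somborMatrix_superGraph hr cls hcls d hd]
  refine (Matrix.charpoly_submatrix_sub_diagonal cls hsurj _ fun i => (d i : ℝ) * rt2).trans ?_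
  congr 2
  ext i j
  simp only [Matrix.sub_apply, Matrix.mul_diagonal, Matrix.diagonal_apply, Matrix.of_apply,
    mem_filter, mem_univ, true_and, exists_and_left]
  split_ifs with hij <;> (try subst hij) <;> ring

end SuperGraph

theorem stmt0_general {V : Type*} [Fintype V] [DecidableEq V] (G : SimpleGraph V)
    (r : V → V → Prop) (hr : Equivalence r)
    (k : ℕ) (Cl : Fin k → Finset V)
    (hne : ∀ i, (Cl i).Nonempty)
    (hpart : ∀ v : V, ∃! i, v ∈ Cl i)
    (hclass : ∀ i, ∀ x ∈ Cl i, ∀ y : V, y ∈ Cl i ↔ r x y) :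
    (∀ i, ∀ x ∈ Cl i, ∀ y ∈ Cl i,
        sdeg (superGraph G r hr) x = sdeg (superGraph G r hr) y) ∧
    (∀ d : Fin k → ℕ, (∀ i, ∀ x ∈ Cl i, sdeg (superGraph G r hr) x = d i) →
      somborCharpoly (superGraph G r hr) =
        (Matrix.of fun i j : Fin k =>
            if i = j then (((Cl i).card : ℝ) - 1) * (d i : ℝ) * rt2
            else if ∃ x ∈ Cl i, ∃ y ∈ Cl j, (superGraph G r hr).Adj x y then
              ((Cl j).card : ℝ) * Real.sqrt ((d i : ℝ) ^ 2 + (d j : ℝ) ^ 2)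
            else 0).charpoly *
        ∏ i, (X + C ((d i : ℝ) * rt2)) ^ ((Cl i).card - 1)) := by
  choose cls hcls_mem using fun v => (hpart v).exists
  obtain rfl : Cl = fun i => ({v | cls v = i} : Finset V) := by
    ext i v
    simpa using ⟨fun hv => (hpart v).unique (hcls_mem v) hv, fun hv => hv ▸ hcls_mem v⟩
  have hcls : ∀ u v, cls u = cls v ↔ r u v := fun u v => by
    simpa [eq_comm] using hclass (cls u) u (by simp) v
  refine ⟨fun i x hx y hy => sdeg_superGraph_eq_of_rel hr ((hclass i x hx y).mp hy),
    fun d hd => ?_⟩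
  refine somborCharpoly_superGraph hr cls hcls (fun i => ?_) d fun v => hd _ v (by simp)
  obtain ⟨v, hv⟩ := hne i
  exact ⟨v, by simpa using hv⟩

theorem stmt0 {V : Type*} [Fintype V] [DecidableEq V] (G : SimpleGraph V)
    (hconn : G.Connected) (r : V → V → Prop) (hr : Equivalence r)
    (k : ℕ) (Cl : Fin k → Finset V)
    (hne : ∀ i, (Cl i).Nonempty)
    (hpart : ∀ v : V, ∃! i, v ∈ Cl i)
    (hclass : ∀ i, ∀ x ∈ Cl i, ∀ y : V, y ∈ Cl i ↔ r x y) :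
    (∀ i, ∀ x ∈ Cl i, ∀ y ∈ Cl i,
        sdeg (superGraph G r hr) x = sdeg (superGraph G r hr) y) ∧
    (∀ d : Fin k → ℕ, (∀ i, ∀ x ∈ Cl i, sdeg (superGraph G r hr) x = d i) →
      somborCharpoly (superGraph G r hr) =
        (Matrix.of fun i j : Fin k =>
            if i = j then (((Cl i).card : ℝ) - 1) * (d i : ℝ) * rt2
            else if ∃ x ∈ Cl i, ∃ y ∈ Cl j, (superGraph G r hr).Adj x y then
              ((Cl j).card : ℝ) * Real.sqrt ((d i : ℝ) ^ 2 + (d j : ℝ) ^ 2)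
            else 0).charpoly *
        ∏ i, (X + C ((d i : ℝ) * rt2)) ^ ((Cl i).card - 1)) :=
  stmt0_general G r hr k Cl hne hpart hclass
end

section
/- Let k ≥ 2 and n_1, …, n_k ≥ 1 with n = n_1 + … + n_k, and let Γ be the generalized join K_{1,k−1}[K_{n_1}, K_{n_2}, …, K_{n_k}]: its vertex set is the disjoint union of sets V_1, …, V_k with |V_i| = n_i, any two distinct vertices inside the same V_i are adjacent, every vertex of V_1 is adjacent to every vertex of V_j for each j ≥ 2, and there are no other edges. Set d_1 = n − 1 and d_i = n_1 + n_i − 1 for 2 ≤ i ≤ k. Then the Sombor characteristic polynomial of Γ equals ∏_{i=1}^{k} (x + √2·d_i)^{ n_i − 1 } · [ ∏_{i=1}^{k} (x − (n_i − 1)·√2·d_i) − Σ_{j=2}^{k} n_1·n_j·(d_1² + d_j²) · ∏_{i ∉ {1,j}} (x − (n_i − 1)·√2·d_i) ]. -/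
open Polynomial
open scoped Classical

/-- The generalized join `K_{1,k-1}[K_{nn 0}, …, K_{nn (k-1)}]`: block `i` is a clique of
size `nn i`, and every vertex of block `0` is adjacent to every other vertex. -/
def joinGraph (k : ℕ) (nn : Fin k → ℕ) : SimpleGraph (Σ i : Fin k, Fin (nn i)) where
  Adj x y := x ≠ y ∧ (x.1 = y.1 ∨ x.1.val = 0 ∨ y.1.val = 0)
  symm := by
    constructor
    rintro x y ⟨h, c | c | c⟩
    · exact ⟨h.symm, Or.inl c.symm⟩
    · exact ⟨h.symm, Or.inr (Or.inr c)⟩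
    · exact ⟨h.symm, Or.inr (Or.inl c)⟩
  loopless := by constructor; rintro x ⟨h, -⟩; exact h rfl

/-!
The characteristic matrix `xI - S(Γ)` is a diagonal matrix, with entry `x + √2 d_i` on block `i`,
plus a matrix that is constant on each pair of blocks. Writing the latter as `P W Pᵀ`, with `P` the
block-indicator matrix, the matrix determinant lemma reduces `det (xI - S(Γ))` to
`∏ (x + √2 d_i)^(n_i - 1)` times the characteristic polynomial of the `k × k` quotient matrix.
For the star `K_{1,k-1}` the quotient matrix vanishes off its diagonal, first row and first column,
so only the identity and the transpositions through the first block contribute to its determinant.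
-/

theorem Equiv.Perm.eq_swap_of_forall_apply_eq_self_or_eq {ι : Type*} [DecidableEq ι]
    {σ : Equiv.Perm ι} {i₀ : ι} (h : ∀ i ≠ i₀, σ i = i ∨ σ i = i₀) :
    σ = Equiv.swap i₀ (σ i₀) := by
  ext i
  rcases eq_or_ne i i₀ with rfl | hi
  · simp
  have hσi₀ := h (σ i₀)
  rcases h i hi with hσi | hσi <;> grind [Equiv.apply_eq_iff_eq]

namespace Matrix

theorem det_of_eq_zero_off_row_col {R ι : Type*} [CommRing R] [Fintype ι] [DecidableEq ι]
    (A : Matrix ι ι R) (i₀ : ι) (h : ∀ i j, i ≠ j → i ≠ i₀ → j ≠ i₀ → A i j = 0) :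
    A.det = ∏ i, A i i -
      ∑ j ∈ Finset.univ \ {i₀}, A i₀ j * A j i₀ * ∏ i ∈ Finset.univ \ {i₀, j}, A i i := by
  have hvanish : ∀ σ : Equiv.Perm ι, σ ∉ Finset.univ.image (Equiv.swap i₀) →
      Equiv.Perm.sign σ • ∏ i, A (σ i) i = 0 := by
    intro σ hσ
    have hne : σ ≠ Equiv.swap i₀ (σ i₀) := fun he => hσ (Finset.mem_image.2 ⟨_, by simp, he.symm⟩)
    obtain ⟨m, hm, hσm, hσm₀⟩ : ∃ m ≠ i₀, σ m ≠ m ∧ σ m ≠ i₀ := by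
      by_contra! hcon
      exact hne (Equiv.Perm.eq_swap_of_forall_apply_eq_self_or_eq fun i hi =>
        or_iff_not_imp_left.2 (hcon i hi))
    rw [Finset.prod_eq_zero (f := fun i => A (σ i) i) (Finset.mem_univ m) (h _ _ hσm hσm₀ hm),
      smul_zero]
  have hswap : ∀ j ≠ i₀, ∏ i, A (Equiv.swap i₀ j i) i =
      A i₀ j * A j i₀ * ∏ i ∈ Finset.univ \ {i₀, j}, A i i := by
    intro j hj
    rw [← Finset.prod_sdiff (Finset.subset_univ {i₀, j}), Finset.prod_pair hj.symm,
      Equiv.swap_apply_left, Equiv.swap_apply_right,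
      Finset.prod_congr rfl fun i hi => by rw [Equiv.swap_apply_of_ne_of_ne (by grind) (by grind)]]
    ring
  rw [det_apply, ← Finset.sum_subset (Finset.subset_univ _) fun σ _ => hvanish σ,
    Finset.sum_image fun j _ j' _ hjj' => by simpa using congrArg (· i₀) hjj',
    Finset.sum_eq_add_sum_sdiff_singleton_of_mem (Finset.mem_univ i₀), sub_eq_add_neg,
    ← Finset.sum_neg_distrib]
  congr 1
  · simp
  · refine Finset.sum_congr rfl fun j hj => ?_
    have hj : j ≠ i₀ := by simpa using hj
    rw [hswap j hj, Equiv.Perm.sign_swap hj.symm, Units.neg_smul, one_smul]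

variable {ι : Type*} [Fintype ι] [DecidableEq ι] {n : ι → ℕ}

theorem det_diagonal_add_submatrix_sigmaFst_of_field {K : Type*} [Field K] (hn : ∀ i, 1 ≤ n i)
    (a : ι → K) (ha : ∀ i, a i ≠ 0) (W : Matrix ι ι K) :
    (diagonal (fun u : Σ i, Fin (n i) => a u.1) + W.submatrix Sigma.fst Sigma.fst).det =
      (∏ i, a i ^ (n i - 1)) * (diagonal a + W * diagonal (fun i => (n i : K))).det := by
  set P : Matrix (Σ i, Fin (n i)) ι K := (1 : Matrix ι ι K).submatrix Sigma.fst id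
  have hPWP : W.submatrix Sigma.fst Sigma.fst = P * (W * Pᵀ) := by
    ext u v
    simp [P, mul_apply, one_apply]
  have hPDP : Pᵀ * (diagonal (fun u : Σ i, Fin (n i) => a u.1))⁻¹ * P =
      diagonal (fun i => n i * (a i)⁻¹) := by
    rw [inv_eq_left_inv (B := diagonal fun u => (a u.1)⁻¹) (by simp [ha])]
    ext i j
    rcases eq_or_ne i j with rfl | hij <;>
      simp [P, mul_apply, one_apply, diagonal_apply, Fintype.sum_sigma, *]
  have hdetD : (diagonal (fun u : Σ i, Fin (n i) => a u.1)).det = ∏ i, a i ^ n i := by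
    simp [det_diagonal, Fintype.prod_sigma]
  have hfactor : (1 + W * diagonal (fun i => n i * (a i)⁻¹)) * diagonal a =
      diagonal a + W * diagonal (fun i => (n i : K)) := by
    rw [add_mul, one_mul, Matrix.mul_assoc, diagonal_mul_diagonal]
    congr 3
    ext i
    field_simp [ha i]
  have hpow : ∀ i, a i ^ n i = a i ^ (n i - 1) * a i := fun i => by
    rw [← pow_succ, Nat.sub_add_cancel (hn i)]
  rw [hPWP, det_add_mul _ _ (by simp [hdetD, Finset.prod_ne_zero_iff, ha]), Matrix.mul_assoc W,
    Matrix.mul_assoc W, hPDP, hdetD, ← hfactor, det_mul, det_diagonal,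
    Finset.prod_congr rfl fun i _ => hpow i, Finset.prod_mul_distrib]
  ring

theorem det_diagonal_add_submatrix_sigmaFst {R : Type*} [CommRing R] [IsDomain R]
    (hn : ∀ i, 1 ≤ n i) (a : ι → R) (ha : ∀ i, a i ≠ 0) (W : Matrix ι ι R) :
    (diagonal (fun u : Σ i, Fin (n i) => a u.1) + W.submatrix Sigma.fst Sigma.fst).det =
      (∏ i, a i ^ (n i - 1)) * (diagonal a + W * diagonal (fun i => (n i : R))).det := by
  have hinj := IsFractionRing.injective R (FractionRing R)
  have key := det_diagonal_add_submatrix_sigmaFst_of_field hn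
    (fun i => algebraMap R (FractionRing R) (a i)) (fun i => (map_ne_zero_iff _ hinj).2 (ha i))
    (W.map (algebraMap R (FractionRing R)))
  apply hinj
  rw [RingHom.map_det, map_mul, RingHom.map_det]
  simpa [map_add, map_mul, diagonal_map, submatrix_map] using key

theorem charpoly_submatrix_sigmaFst_sub_diagonal {R : Type*} [CommRing R] [IsDomain R]
    (hn : ∀ i, 1 ≤ n i) (T : Matrix ι ι R) :
    (T.submatrix Sigma.fst Sigma.fst - diagonal (fun u : Σ i, Fin (n i) => T u.1 u.1)).charpoly =
      (∏ i, (X + C (T i i)) ^ (n i - 1)) *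
        (T * diagonal (fun i => (n i : R)) - diagonal (fun i => T i i)).charpoly := by
  have hchar : charmatrix (T.submatrix Sigma.fst Sigma.fst -
        diagonal (fun u : Σ i, Fin (n i) => T u.1 u.1)) =
      diagonal (fun u : Σ i, Fin (n i) => X + C (T u.1 u.1)) +
        (-T.map C).submatrix Sigma.fst Sigma.fst := by
    ext u v
    rcases eq_or_ne u v with rfl | huv <;> simp [*]
  have hquot : diagonal (fun i => X + C (T i i)) + -T.map C * diagonal (fun i => (n i : R[X])) =
      charmatrix (T * diagonal (fun i => (n i : R)) - diagonal (fun i => T i i)) := by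
    ext i j
    rcases eq_or_ne i j with rfl | hij <;> simp [*]
    ring
  rw [charpoly, hchar,
    det_diagonal_add_submatrix_sigmaFst hn (fun i => X + C (T i i)) fun i => X_add_C_ne_zero _,
    hquot, charpoly]

end Matrix

section JoinGraph

open Matrix

variable {k : ℕ} [NeZero k]

/-- The Sombor weights between the blocks of `joinGraph k nn`, `d i` standing for the common
degree of the vertices of block `i`. -/
noncomputable def joinSomborQuotient (d : Fin k → ℝ) : Matrix (Fin k) (Fin k) ℝ :=
  of fun i j => if i = j ∨ i = 0 ∨ j = 0 then √(d i ^ 2 + d j ^ 2) else 0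

theorem joinSomborQuotient_apply_self (d : Fin k → ℝ) {i : Fin k} (hi : 0 ≤ d i) :
    joinSomborQuotient d i i = rt2 * d i := by
  rw [joinSomborQuotient, of_apply, if_pos (Or.inl rfl), ← two_mul, Real.sqrt_mul zero_le_two,
    Real.sqrt_sq hi, rt2]

variable (nn : Fin k → ℕ)

theorem sdeg_joinGraph_add_one (u : Σ i : Fin k, Fin (nn i)) :
    sdeg (joinGraph k nn) u + 1 = if u.1 = 0 then ∑ j, nn j else nn 0 + nn u.1 := by
  set B := Finset.univ.filter fun j : Fin k => u.1 = j ∨ u.1 = 0 ∨ j = 0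
  have hnbr : {v | (joinGraph k nn).Adj u v} = ↑((B.sigma fun _ => Finset.univ).erase u) := by
    ext v
    simp [B, joinGraph, Fin.val_eq_zero_iff, eq_comm (a := v), and_comm]
  rw [sdeg, hnbr, Set.ncard_coe_finset, Finset.card_erase_add_one (by simp [B]),
    Finset.card_sigma]
  split_ifs with hu
  · simp [B, hu]
  · have hB : B = {u.1, 0} := by
      ext j
      simp [B, hu, eq_comm]
    rw [hB, Finset.sum_pair hu]
    simp [add_comm]

theorem somborMatrix_joinGraph (d : Fin k → ℝ)
    (hd : ∀ u, (sdeg (joinGraph k nn) u : ℝ) = d u.1) :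
    somborMatrix (joinGraph k nn) =
      (joinSomborQuotient d).submatrix Sigma.fst Sigma.fst -
        diagonal fun u => joinSomborQuotient d u.1 u.1 := by
  ext u v
  rcases eq_or_ne u v with rfl | huv
  · simp [somborMatrix]
  · simp only [somborMatrix, of_apply, hd]
    simp [joinSomborQuotient, joinGraph, huv, Fin.val_eq_zero_iff]

theorem charpoly_joinSomborQuotient_mul_diagonal_sub (d : Fin k → ℝ) :
    (joinSomborQuotient d * diagonal (fun i => (nn i : ℝ)) -
        diagonal (fun i => joinSomborQuotient d i i)).charpoly =
      ∏ i, (X - C (((nn i : ℝ) - 1) * joinSomborQuotient d i i)) -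
        ∑ j ∈ Finset.univ \ {0}, C ((nn 0 : ℝ) * nn j * (d 0 ^ 2 + d j ^ 2)) *
          ∏ i ∈ Finset.univ \ {0, j}, (X - C (((nn i : ℝ) - 1) * joinSomborQuotient d i i)) := by
  set T := joinSomborQuotient d
  set B := T * diagonal (fun i => (nn i : ℝ)) - diagonal (fun i => T i i)
  have hentry : ∀ i j, B i j = if i = j then ((nn i : ℝ) - 1) * T i i else T i j * nn j := by
    intro i j
    rcases eq_or_ne i j with rfl | hij
    · simp only [B, Matrix.sub_apply, mul_diagonal, diagonal_apply_eq, if_true]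
      ring
    · simp [B, mul_diagonal, hij]
  have hoff : ∀ i j, i ≠ j → i ≠ 0 → j ≠ 0 → charmatrix B i j = 0 := by
    intro i j hij hi hj
    rw [charmatrix_apply_ne _ _ _ hij, hentry, if_neg hij]
    simp [T, joinSomborQuotient, hij, hi, hj]
  have hdiag : ∀ i, charmatrix B i i = X - C (((nn i : ℝ) - 1) * T i i) := fun i => by
    rw [charmatrix_apply_eq, hentry, if_pos rfl]
  rw [charpoly, det_of_eq_zero_off_row_col _ 0 hoff]
  refine congrArg₂ (· - ·) (Finset.prod_congr rfl fun i _ => hdiag i) ?_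
  refine Finset.sum_congr rfl fun j hj => ?_
  have hj : j ≠ 0 := by simpa using hj
  have hT : T 0 j * T j 0 = d 0 ^ 2 + d j ^ 2 := by
    simp only [T, joinSomborQuotient, of_apply, true_or, or_true, if_true]
    rw [add_comm (d j ^ 2), Real.mul_self_sqrt (by positivity)]
  rw [charmatrix_apply_ne _ _ _ hj.symm, charmatrix_apply_ne _ _ _ hj, hentry, hentry,
    if_neg hj.symm, if_neg hj, neg_mul_neg, ← C_mul, Finset.prod_congr rfl fun i _ => hdiag i, ← hT]
  congr 2
  ring

end JoinGraph

theorem stmt1_general (k : ℕ) [NeZero k] (nn : Fin k → ℕ) (hnn : ∀ i, 1 ≤ nn i)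
    (n : ℕ) (hn : n = ∑ i, nn i)
    (d : Fin k → ℝ) (hd0 : d 0 = (n : ℝ) - 1)
    (hdi : ∀ i : Fin k, i ≠ 0 → d i = (nn 0 : ℝ) + (nn i : ℝ) - 1) :
    somborCharpoly (joinGraph k nn) =
      (∏ i, (X + C (rt2 * d i)) ^ (nn i - 1)) *
        ((∏ i, (X - C (((nn i : ℝ) - 1) * rt2 * d i))) -
          ∑ j ∈ Finset.univ \ {(0 : Fin k)},
            C ((nn 0 : ℝ) * (nn j : ℝ) * (d 0 ^ 2 + d j ^ 2)) *
              ∏ i ∈ Finset.univ \ {0, j}, (X - C (((nn i : ℝ) - 1) * rt2 * d i))) := by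
  have hdeg : ∀ u : Σ i, Fin (nn i), (sdeg (joinGraph k nn) u : ℝ) = d u.1 := by
    intro u
    have h := congrArg (Nat.cast : ℕ → ℝ) (sdeg_joinGraph_add_one nn u)
    split_ifs at h with hu
    · rw [hu, hd0, hn]; push_cast at h ⊢; linarith
    · rw [hdi _ hu]; push_cast at h; linarith
  have hd_nonneg : ∀ i, 0 ≤ d i := fun i => hdeg ⟨i, ⟨0, hnn i⟩⟩ ▸ Nat.cast_nonneg _
  rw [somborCharpoly, somborMatrix_joinGraph nn d hdeg,
    Matrix.charpoly_submatrix_sigmaFst_sub_diagonal hnn,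
    charpoly_joinSomborQuotient_mul_diagonal_sub]
  simp only [joinSomborQuotient_apply_self d (hd_nonneg _), ← mul_assoc]

theorem stmt1 (k : ℕ) [NeZero k] (hk : 2 ≤ k) (nn : Fin k → ℕ) (hnn : ∀ i, 1 ≤ nn i)
    (n : ℕ) (hn : n = ∑ i, nn i)
    (d : Fin k → ℝ) (hd0 : d 0 = (n : ℝ) - 1)
    (hdi : ∀ i : Fin k, i ≠ 0 → d i = (nn 0 : ℝ) + (nn i : ℝ) - 1) :
    somborCharpoly (joinGraph k nn) =
      (∏ i, (X + C (rt2 * d i)) ^ (nn i - 1)) *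
        ((∏ i, (X - C (((nn i : ℝ) - 1) * rt2 * d i))) -
          ∑ j ∈ Finset.univ \ {(0 : Fin k)},
            C ((nn 0 : ℝ) * (nn j : ℝ) * (d 0 ^ 2 + d j ^ 2)) *
              ∏ i ∈ Finset.univ \ {0, j}, (X - C (((nn i : ℝ) - 1) * rt2 * d i))) :=
  stmt1_general k nn hnn n hn d hd0 hdi
end

section
/- For every odd integer n ≥ 3, the Sombor characteristic polynomial of the commuting graph Δ(D_{2n}) of the dihedral group D_{2n} equals (x + (n−1)·√2)^{n−2} · x^{n−1} · ( x³ + √2·(3n − n² − 2)·x² + (15n² − 9n³ − 10n + 2)·x + √2·(4n⁵ − 16n⁴ + 22n³ − 14n² + 4n) ). -/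
open Polynomial
open scoped Classical

/-!
For odd `n` the commuting graph of `D_{2n}` has three cells: the identity, adjacent to every
vertex; the `n - 1` nontrivial rotations, forming a clique; and the `n` reflections, adjacent only
to the identity. Adjacency and degrees depend only on the cells, so the Sombor matrix is
`S = P B Pᵀ - diag(B_{π g, π g})` for the cell-indicator matrix `P` and a `3 × 3` matrix `B`.
Hence `xI - S = D - P (B Pᵀ)` with `D = diag(x + B_{π g, π g})` and `D P = P E` for
`E = diag(x + B_{kk})`, and the Weinstein–Aronszajn identity `det (1 - K L) = det (1 - L K)` gives
`det (xI - S) · det E = det D · det (E - B Pᵀ P)`, the last factor being the characteristic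
polynomial of the quotient matrix `B · diag |cell| - diag B`.
-/

open Finset

namespace Matrix

def cellQuotient {ι m α : Type*} [Fintype ι] [Fintype m] [DecidableEq m] [Ring α]
    (π : ι → m) (B : Matrix m m α) : Matrix m m α :=
  B * diagonal (fun k => (#{g | π g = k} : α)) - diagonal fun k => B k k

variable {ι m α : Type*} [Fintype ι] [DecidableEq ι] [Fintype m] [DecidableEq m]

theorem det_sub_mul_mul_det_of_mul_eq_mul [CommRing α] {D : Matrix ι ι α} {E : Matrix m m α}
    {U : Matrix ι m α} (V : Matrix m ι α) (hD : IsUnit D.det) (h : D * U = U * E) :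
    (D - U * V).det * E.det = D.det * (E - V * U).det := by
  have hU : D⁻¹ * U * E = U := by
    rw [Matrix.mul_assoc, ← h, ← Matrix.mul_assoc, nonsing_inv_mul _ hD, Matrix.one_mul]
  calc (D - U * V).det * E.det = D.det * (1 - D⁻¹ * U * V).det * E.det := by
        rw [← det_mul, Matrix.mul_sub, Matrix.mul_one, ← Matrix.mul_assoc, ← Matrix.mul_assoc,
          mul_nonsing_inv _ hD, Matrix.one_mul]
    _ = D.det * ((1 - V * (D⁻¹ * U)).det * E.det) := by
        rw [det_one_sub_mul_comm, mul_assoc]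
    _ = D.det * (E - V * U).det := by
        rw [← det_mul, Matrix.sub_mul, Matrix.one_mul, Matrix.mul_assoc, hU]

theorem det_sub_mul_mul_det_of_mul_eq_mul_of_det_ne_zero [CommRing α] [IsDomain α]
    {D : Matrix ι ι α} {E : Matrix m m α} {U : Matrix ι m α} (V : Matrix m ι α)
    (hD : D.det ≠ 0) (h : D * U = U * E) :
    (D - U * V).det * E.det = D.det * (E - V * U).det := by
  let f := algebraMap α (FractionRing α)
  have hf : Function.Injective f := IsFractionRing.injective α (FractionRing α)
  apply hf
  simp only [map_mul, RingHom.map_det, map_sub, RingHom.mapMatrix_apply, Matrix.map_mul]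
  refine det_sub_mul_mul_det_of_mul_eq_mul _ ?_ (by rw [← Matrix.map_mul, h, Matrix.map_mul])
  rw [← RingHom.mapMatrix_apply, ← RingHom.map_det, isUnit_iff_ne_zero, map_ne_zero_iff f hf]
  exact hD

theorem charpoly_mul_prod_eq_of_offDiag_eq [CommRing α] [IsDomain α] (M : Matrix ι ι α)
    (π : ι → m) (B : Matrix m m α) (hdiag : ∀ g, M g g = 0)
    (hoff : ∀ g h, g ≠ h → M g h = B (π g) (π h)) :
    M.charpoly * ∏ k, (X + C (B k k)) =
      (∏ k, (X + C (B k k)) ^ #{g | π g = k}) * (cellQuotient π B).charpoly := by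
  let U : Matrix ι m α[X] := of fun g k => if π g = k then 1 else 0
  let D : Matrix ι ι α[X] := diagonal fun g => X + C (B (π g) (π g))
  let E : Matrix m m α[X] := diagonal fun k => X + C (B k k)
  have hUU : Uᵀ * U = diagonal fun k => (#{g | π g = k} : α[X]) := by
    refine Matrix.ext fun k l => ?_
    by_cases hkl : k = l
    · subst hkl; simp [U, mul_apply, ← ite_and, Finset.sum_boole]
    · simpa [U, mul_apply, hkl] using Finset.sum_eq_zero fun g _ => by grind
  have hDU : D * U = U * E := by
    refine Matrix.ext fun g k => ?_
    by_cases hg : π g = k <;> simp [D, E, U, hg]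
  have hM : M.charmatrix = D - U * (B.map C * Uᵀ) := by
    refine Matrix.ext fun g h => ?_
    by_cases hgh : g = h
    · subst hgh; simp [D, U, hdiag, mul_apply]
    · simp [D, U, hgh, hoff g h hgh, mul_apply]
  have hQ : E - B.map C * Uᵀ * U = (cellQuotient π B).charmatrix := by
    rw [Matrix.mul_assoc, hUU, cellQuotient]
    refine Matrix.ext fun k l => ?_
    by_cases hkl : k = l
    · subst hkl; simp [E]; ring
    · simp [E, hkl]
  have hD : D.det ≠ 0 := by
    simp only [D, det_diagonal]
    exact Finset.prod_ne_zero_iff.mpr fun g _ => X_add_C_ne_zero _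
  have hcells : ∏ g, (X + C (B (π g) (π g))) = ∏ k, (X + C (B k k)) ^ #{g | π g = k} := by
    rw [← Finset.prod_fiberwise' univ π (fun k => X + C (B k k))]
    simp [prod_const]
  have key := det_sub_mul_mul_det_of_mul_eq_mul_of_det_ne_zero (B.map C * Uᵀ) hD hDU
  rw [← hM, hQ] at key
  simpa [charpoly, E, D, det_diagonal, hcells] using key

theorem charpoly_fin_three_of_zero_entries [CommRing α] (p q u v w : α) :
    (!![0, p, q; u, w, 0; v, 0, 0] : Matrix (Fin 3) (Fin 3) α).charpoly =
      X ^ 3 - C w * X ^ 2 - C (p * u + q * v) * X + C (q * v * w) := by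
  rw [charpoly, det_fin_three]
  simp
  ring

end Matrix

theorem somborMatrix_apply_self {V : Type*} (G : SimpleGraph V) (v : V) :
    somborMatrix G v v = 0 := by
  simp [somborMatrix]

namespace DihedralGroup

variable {n : ℕ}

theorem commute_r_sr_iff (hodd : Odd n) {i j : ZMod n} : Commute (r i) (sr j) ↔ i = 0 := by
  rw [commute_iff_eq, r_mul_sr, sr_mul_r, sr.injEq, sub_eq_add_neg, add_right_inj,
    neg_eq_iff_add_eq_zero, ZMod.add_self_eq_zero_iff_eq_zero hodd]

theorem commute_sr_sr_iff (hodd : Odd n) {i j : ZMod n} : Commute (sr i) (sr j) ↔ i = j := by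
  rw [commute_iff_eq, sr_mul_sr, sr_mul_sr, r.injEq, ← neg_sub, neg_eq_iff_add_eq_zero,
    ZMod.add_self_eq_zero_iff_eq_zero hodd, sub_eq_zero, eq_comm]

def cell : DihedralGroup n → Fin 3
  | r i => if i = 0 then 0 else 1
  | sr _ => 2

-- `CellAdj 0 0` is never used: the identity is alone in its cell.
def CellAdj (k l : Fin 3) : Prop := k = 0 ∨ l = 0 ∨ (k = 1 ∧ l = 1)

instance : DecidableRel CellAdj := fun _ _ => by unfold CellAdj; infer_instance

theorem commutingGraph_adj_iff (hodd : Odd n) {g h : DihedralGroup n} :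
    (commutingGraph (DihedralGroup n)).Adj g h ↔ g ≠ h ∧ CellAdj (cell g) (cell h) := by
  refine and_congr_right fun hne => ?_
  rcases g with i | i <;> rcases h with j | j
  · simp only [r_mul_r, add_comm, cell, CellAdj]
    split_ifs <;> decide
  · rw [← commute_iff_eq, commute_r_sr_iff hodd]
    simp only [cell, CellAdj]
    split_ifs <;> simp_all
  · rw [← commute_iff_eq, Commute.symm_iff, commute_r_sr_iff hodd]
    simp only [cell, CellAdj]
    split_ifs <;> simp_all
  · rw [← commute_iff_eq, commute_sr_sr_iff hodd]
    simpa [cell, CellAdj] using hne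

theorem card_filter_eq_add [NeZero n] (P : DihedralGroup n → Prop) [DecidablePred P] :
    #{g | P g} = #{i | P (r i)} + #{i | P (sr i)} := by
  simp only [card_filter]
  refine (Fintype.sum_equiv equivSum _ (Sum.elim (fun i => if P (r i) then 1 else 0)
    fun i => if P (sr i) then 1 else 0) fun g => ?_).trans (Fintype.sum_sum_type _)
  cases g <;> rfl

theorem card_cell [NeZero n] (k : Fin 3) :
    #{g : DihedralGroup n | cell g = k} = ![1, n - 1, n] k := by
  rw [card_filter_eq_add]
  fin_cases k <;> simp [cell, ite_eq_iff, Finset.filter_eq', Finset.filter_ne', ZMod.card]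

def cellDegree (n : ℕ) : Fin 3 → ℕ := ![2 * n - 1, n - 1, 1]

theorem sdeg_commutingGraph [NeZero n] (hodd : Odd n) (g : DihedralGroup n) :
    sdeg (commutingGraph (DihedralGroup n)) g = cellDegree n (cell g) := by
  rw [sdeg, Set.ncard_eq_toFinset_card', Set.toFinset_ofPred]
  simp only [commutingGraph_adj_iff hodd]
  rw [card_filter_eq_add]
  have : 1 ≤ n := Nat.one_le_iff_ne_zero.mpr (NeZero.ne n)
  rcases g with i | i
  · by_cases hi : i = 0
    · simp [-r_zero, cell, cellDegree, CellAdj, hi, Finset.filter_ne, ZMod.card]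
      omega
    · simp [cell, cellDegree, CellAdj, hi, Finset.filter_ne, ZMod.card, or_not]
  · simp [cell, cellDegree, CellAdj, Finset.filter_eq']

noncomputable def cellSombor (n : ℕ) : Matrix (Fin 3) (Fin 3) ℝ :=
  Matrix.of fun k l =>
    if CellAdj k l then √((cellDegree n k : ℝ) ^ 2 + (cellDegree n l : ℝ) ^ 2) else 0

theorem somborMatrix_commutingGraph_of_ne [NeZero n] (hodd : Odd n) {g h : DihedralGroup n}
    (hgh : g ≠ h) :
    somborMatrix (commutingGraph (DihedralGroup n)) g h = cellSombor n (cell g) (cell h) := by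
  simp only [somborMatrix, cellSombor, Matrix.of_apply, commutingGraph_adj_iff hodd,
    sdeg_commutingGraph hodd, ne_eq, hgh, not_false_eq_true, true_and]

theorem cellSombor_one_one [NeZero n] : cellSombor n 1 1 = (n - 1) * rt2 := by
  have hn : (1 : ℝ) ≤ n := by exact_mod_cast NeZero.one_le
  have hdeg : (cellDegree n 1 : ℝ) = n - 1 := by
    simp [cellDegree, Nat.cast_sub (NeZero.one_le : 1 ≤ n)]
  rw [cellSombor, Matrix.of_apply, if_pos (by decide), hdeg, ← two_mul,
    Real.sqrt_mul zero_le_two, Real.sqrt_sq (by linarith), mul_comm, rt2]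

theorem cellSombor_two_two : cellSombor n 2 2 = 0 := by
  simp [cellSombor, CellAdj]

theorem cellQuotient_cellSombor [NeZero n] :
    Matrix.cellQuotient (cell (n := n)) (cellSombor n) =
      !![0, (n - 1) * √((2 * n - 1) ^ 2 + (n - 1) ^ 2), n * √((2 * n - 1) ^ 2 + 1);
        √((2 * n - 1) ^ 2 + (n - 1) ^ 2), (n - 2) * ((n - 1) * rt2), 0;
        √((2 * n - 1) ^ 2 + 1), 0, 0] := by
  have h1 : ((n - 1 : ℕ) : ℝ) = n - 1 := by simp [Nat.cast_sub (NeZero.one_le : 1 ≤ n)]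
  have h2 : ((2 * n - 1 : ℕ) : ℝ) = 2 * n - 1 := by
    simp [Nat.cast_sub (Nat.one_le_iff_ne_zero.mpr (by simp [NeZero.ne n]) : 1 ≤ 2 * n)]
  refine Matrix.ext fun k l => ?_
  fin_cases k <;> fin_cases l <;>
    simp [Matrix.cellQuotient, Matrix.mul_diagonal, card_cell, cellSombor_one_one] <;>
    simp [cellSombor, CellAdj, cellDegree, h1, h2, add_comm] <;> ring

theorem charpoly_cellQuotient_cellSombor [NeZero n] :
    (Matrix.cellQuotient (cell (n := n)) (cellSombor n)).charpoly =
      X ^ 3 + C (rt2 * (3 * (n : ℝ) - (n : ℝ) ^ 2 - 2)) * X ^ 2 +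
        C (15 * (n : ℝ) ^ 2 - 9 * (n : ℝ) ^ 3 - 10 * (n : ℝ) + 2) * X +
        C (rt2 * (4 * (n : ℝ) ^ 5 - 16 * (n : ℝ) ^ 4 + 22 * (n : ℝ) ^ 3 -
            14 * (n : ℝ) ^ 2 + 4 * (n : ℝ))) := by
  rw [cellQuotient_cellSombor, Matrix.charpoly_fin_three_of_zero_entries]
  set b := √((2 * (n : ℝ) - 1) ^ 2 + ((n : ℝ) - 1) ^ 2)
  set c := √((2 * (n : ℝ) - 1) ^ 2 + 1)
  have hb : b * b = (2 * (n : ℝ) - 1) ^ 2 + ((n : ℝ) - 1) ^ 2 :=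
    Real.mul_self_sqrt (by positivity)
  have hc : c * c = (2 * (n : ℝ) - 1) ^ 2 + 1 := Real.mul_self_sqrt (by positivity)
  rw [show (n - 1) * b * b + n * c * c = -(15 * (n : ℝ) ^ 2 - 9 * n ^ 3 - 10 * n + 2) by
      linear_combination (n - 1 : ℝ) * hb + n * hc,
    show n * c * c * ((n - 2) * ((n - 1) * rt2)) =
        rt2 * (4 * (n : ℝ) ^ 5 - 16 * n ^ 4 + 22 * n ^ 3 - 14 * n ^ 2 + 4 * n) by
      linear_combination (n * (n - 2) * (n - 1) * rt2 : ℝ) * hc,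
    show ((n : ℝ) - 2) * ((n - 1) * rt2) = -(rt2 * (3 * n - n ^ 2 - 2)) by ring,
    map_neg, map_neg]
  ring

end DihedralGroup

theorem stmt3 (n : ℕ) [NeZero n] (hn : 3 ≤ n) (hodd : Odd n) :
    somborCharpoly (commutingGraph (DihedralGroup n)) =
      (X + C (((n : ℝ) - 1) * rt2)) ^ (n - 2) * X ^ (n - 1) *
        (X ^ 3 + C (rt2 * (3 * (n : ℝ) - (n : ℝ) ^ 2 - 2)) * X ^ 2 +
          C (15 * (n : ℝ) ^ 2 - 9 * (n : ℝ) ^ 3 - 10 * (n : ℝ) + 2) * X +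
          C (rt2 * (4 * (n : ℝ) ^ 5 - 16 * (n : ℝ) ^ 4 + 22 * (n : ℝ) ^ 3 -
              14 * (n : ℝ) ^ 2 + 4 * (n : ℝ)))) := by
  unfold somborCharpoly
  have key := Matrix.charpoly_mul_prod_eq_of_offDiag_eq _ DihedralGroup.cell
    (DihedralGroup.cellSombor n) (somborMatrix_apply_self _)
    fun _ _ => DihedralGroup.somborMatrix_commutingGraph_of_ne hodd
  rw [DihedralGroup.charpoly_cellQuotient_cellSombor, Fin.prod_univ_three,
    Fin.prod_univ_three] at key
  simp only [DihedralGroup.card_cell, DihedralGroup.cellSombor_one_one,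
    DihedralGroup.cellSombor_two_two, Matrix.cons_val_zero, Matrix.cons_val_one,
    Matrix.cons_val_two, Matrix.head_cons, Matrix.tail_cons, C_0, add_zero, pow_one] at key
  set A : ℝ[X] := X + C (((n : ℝ) - 1) * rt2)
  have hA : A ^ (n - 1) = A ^ (n - 2) * A := by rw [← pow_succ]; congr 1; omega
  have hX : (X : ℝ[X]) ^ n = X ^ (n - 1) * X := by rw [← pow_succ]; congr 1; omega
  refine mul_right_cancel₀ ?_ (key.trans ?_)
  · exact mul_ne_zero (mul_ne_zero (X_add_C_ne_zero _) (X_add_C_ne_zero _)) X_ne_zero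
  · rw [hA, hX]; ring
end

section
/- For every odd integer n ≥ 3, the Sombor characteristic polynomial of the order super commuting graph Δ^o(Q_{4n}) of the generalized quaternion group Q_{4n} equals (x + (4n−1)·√2) · (x + (2n−1)·√2)^{2n−3} · (x + (2n+1)·√2)^{2n−1} · [ (x − (4n−1)·√2)·(x − (2n−1)(2n−3)·√2)·(x − (2n−1)(2n+1)·√2) − 8(n−1)(10n² − 6n + 1)·(x − (2n−1)(2n+1)·√2) − 8n(10n² − 2n + 1)·(x − (2n−1)(2n−3)·√2) ]. -/
open Polynomial
open scoped Classical

/-!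
For odd `n` the elements of `Q_{4n}` fall into three blocks: the centre `{1, a^n}`, the other
powers of `a`, and the `2n` elements `xa^i`, which are exactly the elements of order 4. An element
of the same order as a non-central `a^i` is again a non-central power of `a`, and these commute
with no `xa^k`; all other pairs are joined through commuting elements or equal orders. So two
distinct vertices of `Δ^o(Q_{4n})` are adjacent unless one is a non-central power of `a` and the
other is some `xa^k`, the degree of a vertex depends only on its block, and the Sombor matrix is
a blow-up `S u v = W (block u) (block v)` (`u ≠ v`, zero diagonal) of a `3 × 3` matrix `W`.

For a blow-up with blocks of sizes `mₖ ≥ 1`, `xI - S = A - E W Eᵀ` with `A` diagonal and `E` the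
block indicator matrix, so the matrix determinant lemma gives, whenever every `x + W k k ≠ 0`,
`det (xI - S) = ∏ₖ (x + W k k) ^ mₖ · det (1 - W · diag (mₖ / (x + W k k)))`; the same determinant
appears in `det (xI - B)` for the quotient matrix `B = W · diag m - diag W`. Hence
`charpoly S = charpoly B · ∏ₖ (X + W k k) ^ (mₖ - 1)`, and it remains to expand the cubic
`charpoly B`.
-/

open Finset Matrix

section ClassBlowup

variable {V κ K : Type*}

def classIndicator [DecidableEq κ] [Zero K] [One K] (c : V → κ) : Matrix V κ K :=
  of fun u k => if c u = k then 1 else 0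

def classBlowup [DecidableEq V] [Zero K] (c : V → κ) (W : Matrix κ κ K) : Matrix V V K :=
  of fun u v => if u = v then 0 else W (c u) (c v)

def quotientMatrix [Fintype V] [Fintype κ] [DecidableEq κ] [Ring K] (c : V → κ)
    (W : Matrix κ κ K) : Matrix κ κ K :=
  W * diagonal (fun l => (#{u | c u = l} : K)) - diagonal (fun k => W k k)

variable [Fintype κ] [DecidableEq κ] [Field K]

lemma quotientMatrix_apply [Fintype V] (c : V → κ) (W : Matrix κ κ K) (k l : κ) :
    quotientMatrix c W k l = W k l * #{u | c u = l} - if k = l then W k k else 0 := by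
  simp [quotientMatrix, diagonal_apply]

lemma classBlowup_eq_indicator_mul [DecidableEq V] (c : V → κ) (W : Matrix κ κ K) :
    classBlowup c W = (classIndicator c : Matrix V κ K) * W * (classIndicator c : Matrix V κ K)ᵀ -
      diagonal (fun u => W (c u) (c u)) := by
  ext u v
  by_cases h : u = v
  · subst h; simp [classBlowup, classIndicator, mul_apply]
  · simp [classBlowup, classIndicator, mul_apply, h]

variable [Fintype V]

lemma eval_charpoly_quotientMatrix (c : V → κ) (W : Matrix κ κ K) {x : K}
    (hx : ∀ k, x + W k k ≠ 0) :
    (quotientMatrix c W).charpoly.eval x =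
      (∏ k, (x + W k k)) *
        det (1 - W * diagonal (fun k => (#{u | c u = k} : K) / (x + W k k))) := by
  have hsplit : scalar κ x - quotientMatrix c W =
      (1 - W * diagonal (fun k => (#{u | c u = k} : K) / (x + W k k))) *
        diagonal (fun k => x + W k k) := by
    rw [Matrix.sub_mul, Matrix.one_mul, Matrix.mul_assoc, diagonal_mul_diagonal, quotientMatrix]
    have hm : (fun k => (#{u | c u = k} : K) / (x + W k k) * (x + W k k)) =
        fun k => (#{u | c u = k} : K) := funext fun k => div_mul_cancel₀ _ (hx k)
    rw [hm]
    ext k l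
    by_cases h : k = l
    · subst h; simp; ring
    · simp [h]
  rw [eval_charpoly, hsplit, det_mul, det_diagonal, mul_comm]

variable [DecidableEq V]

lemma eval_charpoly_classBlowup (c : V → κ) (W : Matrix κ κ K) {x : K}
    (hx : ∀ k, x + W k k ≠ 0) :
    (classBlowup c W).charpoly.eval x =
      (∏ k, (x + W k k) ^ #{u | c u = k}) *
        det (1 - W * diagonal (fun k => (#{u | c u = k} : K) / (x + W k k))) := by
  set E : Matrix V κ K := classIndicator c
  set A : Matrix V V K := diagonal fun u => x + W (c u) (c u)
  set D : Matrix V V K := diagonal fun u => (x + W (c u) (c u))⁻¹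
  have hAD : A * D = 1 := by
    rw [diagonal_mul_diagonal, ← diagonal_one]
    congr 1; funext u; exact mul_inv_cancel₀ (hx _)
  have hEDE : Eᵀ * D * E = diagonal (fun k => (#{u | c u = k} : K) / (x + W k k)) := by
    ext k l
    rw [mul_apply]
    by_cases h : k = l
    · subst h
      simp only [E, D, classIndicator, transpose_apply, of_apply, mul_diagonal, ite_mul, one_mul,
        zero_mul, mul_ite, mul_one, mul_zero, diagonal_apply_eq]
      rw [← sum_filter, sum_congr rfl fun u hu => by rw [(mem_filter.1 hu).2], sum_const,
        nsmul_eq_mul, div_eq_mul_inv, if_pos rfl]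
    · simp only [E, D, classIndicator, transpose_apply, of_apply, mul_diagonal,
        diagonal_apply_ne _ h]
      exact sum_eq_zero fun u _ => by split_ifs <;> simp_all
  have hsplit : scalar V x - classBlowup c W = A * (1 - (D * E) * (W * Eᵀ)) := by
    rw [Matrix.mul_sub, Matrix.mul_one, ← Matrix.mul_assoc, ← Matrix.mul_assoc A, hAD,
      Matrix.one_mul, ← Matrix.mul_assoc, classBlowup_eq_indicator_mul]
    ext u v
    by_cases h : u = v
    · subst h; simp [A]; ring
    · simp [A, E, h]
  rw [eval_charpoly, hsplit, det_mul, det_one_sub_mul_comm, Matrix.mul_assoc,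
    ← Matrix.mul_assoc Eᵀ, hEDE, det_diagonal, ← prod_fiberwise' univ c fun k => x + W k k]
  simp [prod_const]

theorem charpoly_classBlowup [Infinite K] (c : V → κ) (hc : Function.Surjective c)
    (W : Matrix κ κ K) :
    (classBlowup c W).charpoly =
      (quotientMatrix c W).charpoly * ∏ k, (X + C (W k k)) ^ (#{u | c u = k} - 1) := by
  refine Polynomial.eq_of_infinite_eval_eq _ _ <|
    ((Set.finite_range fun k => -W k k).infinite_compl).mono fun x hx => ?_
  have hx : ∀ k, x + W k k ≠ 0 := fun k h => hx ⟨k, by linear_combination -h⟩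
  have hm : ∀ k, #{u | c u = k} - 1 + 1 = #{u | c u = k} := fun k =>
    Nat.sub_add_cancel <| card_pos.2 ⟨(hc k).choose, by simpa using (hc k).choose_spec⟩
  simp only [Set.mem_ofPred_eq, eval_mul, eval_prod, eval_pow, eval_add, eval_X, eval_C,
    eval_charpoly_classBlowup c W hx, eval_charpoly_quotientMatrix c W hx]
  rw [mul_right_comm, ← prod_mul_distrib]
  simp_rw [← pow_succ', hm]

end ClassBlowup

section ClassGraph

variable {V κ : Type*} [DecidableEq V] {G : SimpleGraph V} {c : V → κ} {R : κ → κ → Prop}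

lemma sdeg_add_one_of_adj_iff [Fintype V] [Fintype κ] [DecidableEq κ] (hR : ∀ k, R k k)
    (hG : ∀ u v, G.Adj u v ↔ u ≠ v ∧ R (c u) (c v)) (v : V) :
    sdeg G v + 1 = ∑ l with R (c v) l, #{u | c u = l} := by
  have hnbr : {u | G.Adj v u} = (({u | R (c v) (c u)} : Finset V).erase v : Set V) := by
    ext u; simp [hG, and_comm, ne_comm]
  rw [sdeg, hnbr, Set.ncard_coe_finset, card_erase_add_one (by simp [hR]),
    card_eq_sum_card_fiberwise (f := c) (t := {l | R (c v) l}) fun u hu => by simpa using hu]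
  refine sum_congr rfl fun l hl => ?_
  rw [filter_filter]
  exact congrArg card <| filter_congr fun u _ =>
    ⟨And.right, fun h => ⟨h ▸ (mem_filter.1 hl).2, h⟩⟩

lemma somborMatrix_eq_classBlowup [DecidableRel R] (deg : κ → ℕ)
    (hG : ∀ u v, G.Adj u v ↔ u ≠ v ∧ R (c u) (c v)) (hdeg : ∀ v, sdeg G v = deg (c v)) :
    somborMatrix G = classBlowup c
      (of fun k l => if R k l then √((deg k : ℝ) ^ 2 + (deg l : ℝ) ^ 2) else 0) := by
  ext u v
  by_cases h : u = v
  · subst h; simp [somborMatrix, classBlowup]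
  · simp [somborMatrix, classBlowup, hG, h, hdeg]

end ClassGraph

lemma Matrix.charpoly_fin_three_of_eq_zero {R : Type*} [CommRing R] (M : Matrix (Fin 3) (Fin 3) R)
    (h12 : M 1 2 = 0) (h21 : M 2 1 = 0) :
    M.charpoly = (X - C (M 0 0)) * (X - C (M 1 1)) * (X - C (M 2 2)) -
      C (M 0 1 * M 1 0) * (X - C (M 2 2)) - C (M 0 2 * M 2 0) * (X - C (M 1 1)) := by
  simp [charpoly, det_fin_three, h12, h21]
  ring

lemma Real.sqrt_sq_add_sq_self {d : ℝ} (hd : 0 ≤ d) : √(d ^ 2 + d ^ 2) = d * √2 := by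
  rw [← two_mul, Real.sqrt_mul zero_le_two, Real.sqrt_sq hd, mul_comm]

lemma ZMod.add_self_eq_zero_iff {n : ℕ} [NeZero n] {i : ZMod (2 * n)} :
    i + i = 0 ↔ i = 0 ∨ i = n := by
  have hn := NeZero.pos n
  obtain ⟨j, hj, rfl⟩ : ∃ j < 2 * n, i = (j : ZMod (2 * n)) :=
    ⟨i.val, i.val_lt, (ZMod.natCast_zmod_val i).symm⟩
  rw [← Nat.cast_add, ← Nat.cast_zero, ZMod.natCast_eq_natCast_iff', ZMod.natCast_eq_natCast_iff',
    ZMod.natCast_eq_natCast_iff', Nat.zero_mod, Nat.mod_eq_of_lt hj,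
    Nat.mod_eq_of_lt (by omega : n < 2 * n)]
  constructor
  · intro h
    obtain ⟨c, hc⟩ := Nat.dvd_of_mod_eq_zero h
    have : c < 2 := by nlinarith
    interval_cases c <;> omega
  · rintro (rfl | rfl)
    · simp
    · rw [← two_mul, Nat.mod_self]

lemma ZMod.card_filter_add_self_eq_zero {n : ℕ} [NeZero n] :
    #{i : ZMod (2 * n) | i + i = 0} = 2 := by
  have hn : (n : ZMod (2 * n)) ≠ 0 := by
    rw [Ne, ZMod.natCast_eq_zero_iff]
    have hpos := NeZero.pos n
    exact fun h => by have := Nat.le_of_dvd hpos h; omega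
  rw [filter_congr fun i _ => ZMod.add_self_eq_zero_iff, filter_or, filter_eq', filter_eq']
  simp [card_pair hn.symm]

def orderSuperCommutingGraph (G : Type*) [Group G] : SimpleGraph G :=
  superGraph (commutingGraph G) (orderRel G) (orderRel_equivalence G)

namespace QuaternionGroup

variable {n : ℕ}

lemma a_sq_eq_one_iff {i : ZMod (2 * n)} : (a i : QuaternionGroup n) ^ 2 = 1 ↔ i + i = 0 := by
  rw [sq, a_mul_a, one_def, a.injEq]

lemma a_mul_xa_eq_xa_mul_a_iff {i k : ZMod (2 * n)} :
    a i * xa k = xa k * a i ↔ i + i = 0 := by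
  rw [a_mul_xa, xa_mul_a, xa.injEq]
  constructor <;> intro h <;> linear_combination -h

-- `a i` is central iff `i + i = 0`, i.e. `i ∈ {0, n}`.
def block : QuaternionGroup n → Fin 3
  | a i => if i + i = 0 then 0 else 1
  | xa _ => 2

lemma mul_comm_of_block_eq_zero {u : QuaternionGroup n} (hu : block u = 0) (g : QuaternionGroup n) :
    u * g = g * u := by
  cases u with
  | xa _ => simp [block] at hu
  | a i =>
    have hi : i + i = 0 := by by_contra h; simp [block, h] at hu
    cases g with
    | a j => rw [a_mul_a, a_mul_a, add_comm]
    | xa k => exact a_mul_xa_eq_xa_mul_a_iff.2 hi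

def blockDegree (n : ℕ) : Fin 3 → ℕ := ![4 * n - 1, 2 * n - 1, 2 * n + 1]

noncomputable def blockWeight (n : ℕ) : Matrix (Fin 3) (Fin 3) ℝ :=
  of fun k l => if k = 0 ∨ l = 0 ∨ k = l then
    √((blockDegree n k : ℝ) ^ 2 + (blockDegree n l : ℝ) ^ 2) else 0

lemma blockWeight_eq (hn : 1 ≤ n) : blockWeight n =
    !![(4 * n - 1) * √2, √((4 * n - 1) ^ 2 + (2 * n - 1) ^ 2), √((4 * n - 1) ^ 2 + (2 * n + 1) ^ 2);
      √((2 * n - 1) ^ 2 + (4 * n - 1) ^ 2), (2 * n - 1) * √2, 0;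
      √((2 * n + 1) ^ 2 + (4 * n - 1) ^ 2), 0, (2 * n + 1) * √2] := by
  have h0 : 0 ≤ (4 * n - 1 : ℝ) := by linarith [(Nat.one_le_cast (α := ℝ)).2 hn]
  have h1 : 0 ≤ (2 * n - 1 : ℝ) := by linarith [(Nat.one_le_cast (α := ℝ)).2 hn]
  have h2 : 0 ≤ (2 * n + 1 : ℝ) := by positivity
  ext k l
  fin_cases k <;> fin_cases l <;>
    simp [blockWeight, blockDegree, Nat.cast_sub (by omega : 1 ≤ 4 * n),
      Nat.cast_sub (by omega : 1 ≤ 2 * n), Real.sqrt_sq_add_sq_self, h0, h1, h2]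

variable [NeZero n]

lemma orderOf_a_ne_four (hodd : Odd n) (i : ZMod (2 * n)) :
    orderOf (a i : QuaternionGroup n) ≠ 4 := by
  intro h
  obtain ⟨c, hc⟩ : 4 ∣ 2 * n := h ▸ orderOf_a i ▸ Nat.div_dvd_of_dvd (Nat.gcd_dvd_left _ _)
  obtain ⟨k, rfl⟩ := hodd
  omega

lemma exists_xa_of_orderOf_eq_four (hodd : Odd n) {x : QuaternionGroup n} (hx : orderOf x = 4) :
    ∃ k, x = xa k := by
  cases x with
  | a i => exact absurd hx (orderOf_a_ne_four hodd i)
  | xa k => exact ⟨k, rfl⟩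

lemma not_adj_of_block_eq_one_of_block_eq_two (hodd : Odd n) {u v : QuaternionGroup n}
    (hu : block u = 1) (hv : block v = 2) :
    ¬ (orderSuperCommutingGraph (QuaternionGroup n)).Adj u v := by
  obtain ⟨i, rfl⟩ : ∃ i, u = a i := by
    cases u with
    | a i => exact ⟨i, rfl⟩
    | xa _ => simp [block] at hu
  obtain ⟨k, rfl⟩ : ∃ k, v = xa k := by
    cases v with
    | a j => simp only [block] at hv; split_ifs at hv <;> simp at hv
    | xa k => exact ⟨k, rfl⟩
  have hi : ¬ i + i = 0 := fun h => by simp [block, h] at hu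
  rintro ⟨-, hord | ⟨x, y, hx, hy, -, hxy⟩⟩
  · exact orderOf_a_ne_four hodd i (hord.trans (orderOf_xa k))
  · obtain ⟨k', rfl⟩ := exists_xa_of_orderOf_eq_four hodd (hy.symm.trans (orderOf_xa k))
    obtain ⟨m, rfl⟩ : ∃ m, x = a m := by
      cases x with
      | a m => exact ⟨m, rfl⟩
      | xa l => exact absurd (hx.trans (orderOf_xa l)) (orderOf_a_ne_four hodd i)
    have hsq : ((a i : QuaternionGroup n) ^ 2 = 1) ↔ (a m : QuaternionGroup n) ^ 2 = 1 := by
      rw [← orderOf_dvd_iff_pow_eq_one, ← orderOf_dvd_iff_pow_eq_one, hx]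
    exact hi (a_sq_eq_one_iff.1 (hsq.2 (a_sq_eq_one_iff.2 (a_mul_xa_eq_xa_mul_a_iff.1 hxy))))

theorem orderSuperCommutingGraph_adj_iff (hodd : Odd n) {u v : QuaternionGroup n} :
    (orderSuperCommutingGraph (QuaternionGroup n)).Adj u v ↔
      u ≠ v ∧ (block u = 0 ∨ block v = 0 ∨ block u = block v) := by
  constructor
  · intro hadj
    have h12 := fun hu hv => not_adj_of_block_eq_one_of_block_eq_two hodd hu hv hadj
    have h21 := fun hv hu => not_adj_of_block_eq_one_of_block_eq_two hodd hu hv hadj.symm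
    refine ⟨hadj.ne, ?_⟩
    generalize block u = k, block v = l at h12 h21
    fin_cases k <;> fin_cases l <;> simp_all
  · rintro ⟨hne, h0 | h0 | heq⟩
    · exact ⟨hne, Or.inr ⟨u, v, rfl, rfl, hne, mul_comm_of_block_eq_zero h0 v⟩⟩
    · exact ⟨hne, Or.inr ⟨u, v, rfl, rfl, hne, (mul_comm_of_block_eq_zero h0 u).symm⟩⟩
    · refine ⟨hne, ?_⟩
      cases u with
      | a i =>
        cases v with
        | a j => exact Or.inr ⟨a i, a j, rfl, rfl, hne, by rw [a_mul_a, a_mul_a, add_comm]⟩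
        | xa k => simp only [block] at heq; split_ifs at heq <;> simp at heq
      | xa k =>
        cases v with
        | a j => simp only [block] at heq; split_ifs at heq <;> simp at heq
        | xa l => exact Or.inl ((orderOf_xa k).trans (orderOf_xa l).symm)

lemma card_filter_eq_add (p : QuaternionGroup n → Prop) [DecidablePred p] :
    #{u | p u} = #{i | p (a i)} + #{i | p (xa i)} := by
  let e : ZMod (2 * n) ⊕ ZMod (2 * n) ≃ QuaternionGroup n :=
    { toFun := Sum.elim a xa
      invFun := fun | a i => .inl i | xa i => .inr i
      left_inv := by rintro (i | i) <;> rfl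
      right_inv := by rintro (i | i) <;> rfl }
  simp only [card_filter]
  rw [← Fintype.sum_equiv e _ _ fun _ => rfl, Fintype.sum_sum_type]
  rfl

lemma card_block_zero : #{u : QuaternionGroup n | block u = 0} = 2 := by
  rw [card_filter_eq_add]
  simpa [block] using ZMod.card_filter_add_self_eq_zero

lemma card_block_one : #{u : QuaternionGroup n | block u = 1} = 2 * n - 2 := by
  have h := card_filter_add_card_filter_not (s := univ) fun i : ZMod (2 * n) => i + i = 0
  rw [ZMod.card_filter_add_self_eq_zero, card_univ, ZMod.card] at h
  rw [card_filter_eq_add]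
  simp [block]
  omega

lemma card_block_two : #{u : QuaternionGroup n | block u = 2} = 2 * n := by
  rw [card_filter_eq_add]
  simp [block, ite_eq_iff]

lemma block_surjective (hn : 2 ≤ n) : Function.Surjective (block : QuaternionGroup n → Fin 3) := by
  intro k
  have hk : 0 < #{u : QuaternionGroup n | block u = k} := by
    fin_cases k
    · simp [card_block_zero]
    · simp only [Fin.mk_one, card_block_one]; omega
    · simp only [Fin.reduceFinMk, card_block_two]; omega
  obtain ⟨u, hu⟩ := card_pos.1 hk
  exact ⟨u, (mem_filter.1 hu).2⟩

lemma sdeg_orderSuperCommutingGraph (hodd : Odd n) (v : QuaternionGroup n) :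
    sdeg (orderSuperCommutingGraph (QuaternionGroup n)) v = blockDegree n (block v) := by
  have h := sdeg_add_one_of_adj_iff (R := fun k l => k = 0 ∨ l = 0 ∨ k = l)
    (fun _ => Or.inr (Or.inr rfl)) (fun _ _ => orderSuperCommutingGraph_adj_iff hodd) v
  rw [sum_filter, Fin.sum_univ_three, card_block_zero, card_block_one, card_block_two] at h
  generalize block v = k at h
  have hn := NeZero.pos n
  fin_cases k <;> simp [blockDegree] at h ⊢ <;> omega

lemma somborMatrix_orderSuperCommutingGraph (hodd : Odd n) :
    somborMatrix (orderSuperCommutingGraph (QuaternionGroup n)) =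
      classBlowup block (blockWeight n) :=
  somborMatrix_eq_classBlowup (R := fun k l => k = 0 ∨ l = 0 ∨ k = l) _
    (fun _ _ => orderSuperCommutingGraph_adj_iff hodd) (sdeg_orderSuperCommutingGraph hodd)

lemma charpoly_quotientMatrix_block (hn : 3 ≤ n) :
    (quotientMatrix (block : QuaternionGroup n → Fin 3) (blockWeight n)).charpoly =
      (X - C ((4 * (n : ℝ) - 1) * √2)) * (X - C ((2 * (n : ℝ) - 1) * (2 * (n : ℝ) - 3) * √2)) *
          (X - C ((2 * (n : ℝ) - 1) * (2 * (n : ℝ) + 1) * √2)) -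
        C (8 * ((n : ℝ) - 1) * (10 * (n : ℝ) ^ 2 - 6 * (n : ℝ) + 1)) *
          (X - C ((2 * (n : ℝ) - 1) * (2 * (n : ℝ) + 1) * √2)) -
        C (8 * (n : ℝ) * (10 * (n : ℝ) ^ 2 - 2 * (n : ℝ) + 1)) *
          (X - C ((2 * (n : ℝ) - 1) * (2 * (n : ℝ) - 3) * √2)) := by
  have hm : ((2 * n - 2 : ℕ) : ℝ) = 2 * n - 2 := by
    push_cast [Nat.cast_sub (by omega : 2 ≤ 2 * n)]; ring
  have hW := blockWeight_eq (n := n) (by omega)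
  have hsq : ∀ a b : ℝ, √(a ^ 2 + b ^ 2) * √(b ^ 2 + a ^ 2) = a ^ 2 + b ^ 2 := fun a b => by
    rw [add_comm (b ^ 2), Real.mul_self_sqrt (by positivity)]
  set Q := quotientMatrix (block : QuaternionGroup n → Fin 3) (blockWeight n)
  have q00 : Q 0 0 = (4 * (n : ℝ) - 1) * √2 := by
    simp [Q, quotientMatrix_apply, hW, card_block_zero]; ring
  have q11 : Q 1 1 = (2 * (n : ℝ) - 1) * (2 * (n : ℝ) - 3) * √2 := by
    simp [Q, quotientMatrix_apply, hW, card_block_one, hm]; ring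
  have q22 : Q 2 2 = (2 * (n : ℝ) - 1) * (2 * (n : ℝ) + 1) * √2 := by
    simp [Q, quotientMatrix_apply, hW, card_block_two]; ring
  have p01 : Q 0 1 * Q 1 0 = 8 * ((n : ℝ) - 1) * (10 * (n : ℝ) ^ 2 - 6 * (n : ℝ) + 1) := by
    simp [Q, quotientMatrix_apply, hW, card_block_zero, card_block_one, hm]
    rw [mul_mul_mul_comm, hsq]; ring
  have p02 : Q 0 2 * Q 2 0 = 8 * (n : ℝ) * (10 * (n : ℝ) ^ 2 - 2 * (n : ℝ) + 1) := by
    simp [Q, quotientMatrix_apply, hW, card_block_zero, card_block_two]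
    rw [mul_mul_mul_comm, hsq]; ring
  rw [charpoly_fin_three_of_eq_zero Q (by simp [Q, quotientMatrix_apply, hW])
    (by simp [Q, quotientMatrix_apply, hW]), q00, q11, q22, p01, p02]

end QuaternionGroup

theorem stmt8 (n : ℕ) [NeZero n] (hn : 3 ≤ n) (hodd : Odd n) :
    somborCharpoly (superGraph (commutingGraph (QuaternionGroup n))
        (orderRel (QuaternionGroup n)) (orderRel_equivalence (QuaternionGroup n))) =
      (X + C ((4 * (n : ℝ) - 1) * rt2)) * (X + C ((2 * (n : ℝ) - 1) * rt2)) ^ (2 * n - 3) *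
        (X + C ((2 * (n : ℝ) + 1) * rt2)) ^ (2 * n - 1) *
        ((X - C ((4 * (n : ℝ) - 1) * rt2)) *
            (X - C ((2 * (n : ℝ) - 1) * (2 * (n : ℝ) - 3) * rt2)) *
            (X - C ((2 * (n : ℝ) - 1) * (2 * (n : ℝ) + 1) * rt2)) -
          C (8 * ((n : ℝ) - 1) * (10 * (n : ℝ) ^ 2 - 6 * (n : ℝ) + 1)) *
            (X - C ((2 * (n : ℝ) - 1) * (2 * (n : ℝ) + 1) * rt2)) -
          C (8 * (n : ℝ) * (10 * (n : ℝ) ^ 2 - 2 * (n : ℝ) + 1)) *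
            (X - C ((2 * (n : ℝ) - 1) * (2 * (n : ℝ) - 3) * rt2))) := by
  change (somborMatrix (orderSuperCommutingGraph (QuaternionGroup n))).charpoly = _
  rw [QuaternionGroup.somborMatrix_orderSuperCommutingGraph hodd,
    charpoly_classBlowup _ (QuaternionGroup.block_surjective (by omega)),
    QuaternionGroup.charpoly_quotientMatrix_block hn, Fin.prod_univ_three,
    QuaternionGroup.card_block_zero, QuaternionGroup.card_block_one,
    QuaternionGroup.card_block_two, QuaternionGroup.blockWeight_eq (by omega),
    show 2 * n - 2 - 1 = 2 * n - 3 by omega]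
  simp [rt2]
  ring
end

section
/- For every integer n ≥ 2, the real number −3√2 is a Sombor eigenvalue of the power graph P(Q_{4n}) of the generalized quaternion group Q_{4n} with multiplicity at least n; that is, the kernel of S(P(Q_{4n})) − (−3√2)·I has dimension at least n over ℝ. -/
open Polynomial
open scoped Classical

/-!
For every element `g` of a group, `g` and `g⁻¹` generate the same cyclic subgroup, so when
`g ≠ g⁻¹` they are adjacent vertices of the power graph with the same neighbours otherwise.
For such closed twins `u, v` of degree `d`, the vector `e_u - e_v` is an eigenvector of the
Sombor matrix with eigenvalue `-√(d² + d²) = -√2 d`. In `Q_{4n}` every `xa i` has order `4`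
and no cyclic subgroup other than `⟨xa i⟩` contains it, so its neighbours are the three other
elements of `⟨xa i⟩` and `d = 3`. The `n` pairs `{xa k, xa (n + k)}`, `0 ≤ k < n`, are
disjoint, giving `n` independent eigenvectors for `-3√2`.
-/

open Matrix QuaternionGroup

section Sombor

variable {V : Type*} (G : SimpleGraph V)

lemma sdeg_eq_of_forall_adj_iff {u v : V}
    (h : ∀ w, w ≠ u → w ≠ v → (G.Adj u w ↔ G.Adj v w)) : sdeg G u = sdeg G v := by
  have hnbr : {w | G.Adj v w} = Equiv.swap u v '' {w | G.Adj u w} := by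
    ext w
    rw [Equiv.image_eq_preimage_symm, Equiv.symm_swap]
    simp only [Set.mem_ofPred_eq, Set.mem_preimage]
    rcases eq_or_ne w u with rfl | hu
    · simp [G.adj_comm]
    rcases eq_or_ne w v with rfl | hv
    · simp
    rw [Equiv.swap_apply_of_ne_of_ne hu hv, h w hu hv]
  rw [sdeg, sdeg, hnbr, Set.ncard_image_of_injective _ (Equiv.injective _)]

variable [Fintype V] [DecidableEq V]

lemma somborMatrix_mulVec_single_sub_single {u v : V} (huv : G.Adj u v)
    (h : ∀ w, w ≠ u → w ≠ v → (G.Adj u w ↔ G.Adj v w)) :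
    somborMatrix G *ᵥ (Pi.single u 1 - Pi.single v 1) =
      (-(Real.sqrt 2 * sdeg G u)) • (Pi.single u 1 - Pi.single v 1) := by
  have hdeg := sdeg_eq_of_forall_adj_iff G h
  have hsqrt :
      Real.sqrt ((sdeg G u : ℝ) ^ 2 + (sdeg G u : ℝ) ^ 2) = Real.sqrt 2 * sdeg G u := by
    rw [← two_mul, Real.sqrt_mul zero_le_two, Real.sqrt_sq (Nat.cast_nonneg _)]
  ext w
  simp only [Matrix.mulVec_sub, Matrix.mulVec_single_one, Pi.sub_apply, Pi.smul_apply,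
    Matrix.col_apply, somborMatrix, Matrix.of_apply, smul_eq_mul]
  rcases eq_or_ne w u with rfl | hu
  · simp [huv, huv.ne, hdeg.symm, hsqrt]
  rcases eq_or_ne w v with rfl | hv
  · simp [huv.symm, huv.ne.symm, hdeg.symm, hsqrt]
  simp [hu, hv, G.adj_comm w, h w hu hv, hdeg]

end Sombor

section PowerGraph

variable {G : Type*} [Group G]

lemma powerGraph_adj_inv {g : G} (hg : g⁻¹ ≠ g) : (powerGraph G).Adj g g⁻¹ :=
  ⟨hg.symm, Or.inr (inv_mem (Subgroup.mem_zpowers g))⟩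

lemma powerGraph_adj_iff_adj_inv {g w : G} (hg : w ≠ g) (hg' : w ≠ g⁻¹) :
    (powerGraph G).Adj g w ↔ (powerGraph G).Adj g⁻¹ w := by
  simp only [powerGraph, Subgroup.zpowers_inv, inv_mem_iff, Ne, hg.symm, hg'.symm,
    not_false_eq_true, true_and]

lemma sdeg_powerGraph_of_forall_mem_zpowers [Finite G] {g : G}
    (hmax : ∀ w, g ∈ Subgroup.zpowers w → w ∈ Subgroup.zpowers g) :
    sdeg (powerGraph G) g = orderOf g - 1 := by
  have hnbr : {w | (powerGraph G).Adj g w} = (Subgroup.zpowers g : Set G) \ {g} := by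
    ext w
    simp only [powerGraph, Set.mem_ofPred_eq, Set.mem_sdiff, SetLike.mem_coe,
      Set.mem_singleton_iff]
    exact ⟨fun ⟨hne, hw⟩ => ⟨hw.elim (hmax w) id, Ne.symm hne⟩,
      fun ⟨hw, hne⟩ => ⟨Ne.symm hne, Or.inr hw⟩⟩
  rw [sdeg, hnbr, Set.ncard_sdiff_singleton_of_mem (Subgroup.mem_zpowers g),
    ← Nat.card_coe_set_eq, SetLike.coe_sort_coe, Nat.card_zpowers]

end PowerGraph

section LinearAlgebra

lemma linearIndependent_single_sub_single {ι V R : Type*} [Ring R] [DecidableEq V]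
    {p q : ι → V} (hp : Function.Injective p) (hpq : ∀ j k, p j ≠ q k) :
    LinearIndependent R fun k => (Pi.single (p k) 1 - Pi.single (q k) 1 : V → R) := by
  classical
  refine LinearIndependent.of_comp (LinearMap.funLeft R R p) ?_
  convert Pi.linearIndependent_single_one ι R using 1
  ext k j
  simp [LinearMap.funLeft, Pi.single_apply, hp.eq_iff, hpq j k, eq_comm]

lemma card_le_finrank_ker_sub_smul_one {ι V K : Type*} [Fintype ι] [Fintype V] [DecidableEq V]
    [Field K] {A : Matrix V V K} {μ : K} {v : ι → V → K} (hv : LinearIndependent K v)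
    (hAv : ∀ k, A *ᵥ v k = μ • v k) :
    Fintype.card ι ≤ Module.finrank K (LinearMap.ker (Matrix.toLin' (A - μ • 1))) := by
  rw [← finrank_span_eq_card hv]
  refine Submodule.finrank_mono (Submodule.span_le.mpr (Set.range_subset_iff.mpr fun k => ?_))
  simp [hAv]

end LinearAlgebra

namespace QuaternionGroup

variable {n : ℕ}

lemma xa_inv (i : ZMod (2 * n)) : (xa i)⁻¹ = xa ((n : ZMod (2 * n)) + i) := rfl

lemma a_pow (j : ZMod (2 * n)) (m : ℕ) : a j ^ m = a ((m : ZMod (2 * n)) * j) := by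
  induction m with
  | zero => rw [pow_zero, Nat.cast_zero, zero_mul, one_def]
  | succ m ih => rw [pow_succ, ih, a_mul_a]; push_cast; ring_nf

lemma xa_natCast_injective :
    Function.Injective fun k : Fin n => xa ((k : ℕ) : ZMod (2 * n)) := by
  intro j k hjk
  have hval := congrArg ZMod.val (xa.inj hjk)
  simp only [ZMod.val_natCast] at hval
  ext
  rwa [Nat.mod_eq_of_lt (by omega), Nat.mod_eq_of_lt (by omega)] at hval

lemma xa_natCast_ne_inv (j k : Fin n) :
    xa ((j : ℕ) : ZMod (2 * n)) ≠ (xa ((k : ℕ) : ZMod (2 * n)))⁻¹ := by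
  rw [xa_inv, ← Nat.cast_add, Ne, xa.injEq]
  intro hjk
  have hval := congrArg ZMod.val hjk
  simp only [ZMod.val_natCast] at hval
  rw [Nat.mod_eq_of_lt (by omega), Nat.mod_eq_of_lt (by omega)] at hval
  omega

variable [NeZero n]

lemma xa_notMem_zpowers_a (i j : ZMod (2 * n)) : xa i ∉ Subgroup.zpowers (a j) := by
  intro h
  obtain ⟨m, hm⟩ := mem_powers_iff_mem_zpowers.mpr h
  simp [a_pow] at hm

lemma mem_zpowers_xa_of_xa_mem_zpowers {i : ZMod (2 * n)} {w : QuaternionGroup n}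
    (h : xa i ∈ Subgroup.zpowers w) : w ∈ Subgroup.zpowers (xa i) := by
  cases w with
  | a j => exact absurd h (xa_notMem_zpowers_a i j)
  | xa j =>
    have hle : Subgroup.zpowers (xa i) ≤ Subgroup.zpowers (xa j) := Subgroup.zpowers_le.mpr h
    have hcard : Nat.card (Subgroup.zpowers (xa j)) ≤ Nat.card (Subgroup.zpowers (xa i)) := by
      rw [Nat.card_zpowers, Nat.card_zpowers, orderOf_xa, orderOf_xa]
    rw [Subgroup.eq_of_le_of_card_ge hle hcard]
    exact Subgroup.mem_zpowers _

lemma sdeg_powerGraph_xa (i : ZMod (2 * n)) :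
    sdeg (powerGraph (QuaternionGroup n)) (xa i) = 3 := by
  rw [sdeg_powerGraph_of_forall_mem_zpowers fun _ => mem_zpowers_xa_of_xa_mem_zpowers, orderOf_xa]

lemma xa_inv_ne (i : ZMod (2 * n)) : (xa i)⁻¹ ≠ xa i := by
  have hn : (n : ZMod (2 * n)) ≠ 0 := by
    rw [Ne, ZMod.natCast_eq_zero_iff]
    exact fun hdvd => NeZero.ne n (Nat.eq_zero_of_dvd_of_lt hdvd (by have := NeZero.pos n; omega))
  simpa [xa_inv] using hn

lemma somborMatrix_powerGraph_mulVec_xa (i : ZMod (2 * n)) :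
    somborMatrix (powerGraph (QuaternionGroup n)) *ᵥ
        (Pi.single (xa i) 1 - Pi.single (xa i)⁻¹ 1) =
      (-3 * Real.sqrt 2) • (Pi.single (xa i) 1 - Pi.single (xa i)⁻¹ 1) := by
  rw [somborMatrix_mulVec_single_sub_single _ (powerGraph_adj_inv (xa_inv_ne i))
    fun _ => powerGraph_adj_iff_adj_inv, sdeg_powerGraph_xa]
  norm_num [mul_comm]

end QuaternionGroup

theorem stmt17_general (n : ℕ) [NeZero n] :
    n ≤ Module.finrank ℝ (LinearMap.ker (Matrix.toLin'
      (somborMatrix (powerGraph (QuaternionGroup n)) -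
        (-3 * Real.sqrt 2) • (1 : Matrix (QuaternionGroup n) (QuaternionGroup n) ℝ)))) := by
  have hli : LinearIndependent ℝ fun k : Fin n =>
      (Pi.single (xa ((k : ℕ) : ZMod (2 * n))) 1 -
        Pi.single (xa ((k : ℕ) : ZMod (2 * n)))⁻¹ 1 : QuaternionGroup n → ℝ) :=
    linearIndependent_single_sub_single xa_natCast_injective xa_natCast_ne_inv
  simpa using card_le_finrank_ker_sub_smul_one hli fun k => somborMatrix_powerGraph_mulVec_xa _

theorem stmt17 (n : ℕ) [NeZero n] (hn : 2 ≤ n) :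
    n ≤ Module.finrank ℝ (LinearMap.ker (Matrix.toLin'
      (somborMatrix (powerGraph (QuaternionGroup n)) -
        (-3 * Real.sqrt 2) • (1 : Matrix (QuaternionGroup n) (QuaternionGroup n) ℝ)))) :=
  stmt17_general n
end

section
/- For every odd integer n ≥ 3, the real number −(2n+1)·√2 is a Sombor eigenvalue of the order super power graph P^o(Q_{4n}) of the generalized quaternion group Q_{4n} with multiplicity at least 2n−1; that is, the kernel of S(P^o(Q_{4n})) + (2n+1)·√2·I has dimension at least 2n−1 over ℝ. -/
open Polynomial
open scoped Classical

/-! For odd `n` the elements of order `4` in `Q_{4n}` are exactly the `2n` elements `xa i`, since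
every `a k` has order dividing `2n`. In `P^o(G)` two distinct vertices are adjacent iff one order
divides the other (a power of `y` realises every divisor of `orderOf y`), so vertices of equal order
are adjacent twins, and each `xa i` has degree `2n + 1`: its neighbours are the other `xa j`, `1`
and `a n`. For adjacent twins of degree `d` the entry `√(d² + d²) = d√2` of the Sombor matrix
equals the diagonal shift, so all `2n` columns of `S + (2n+1)√2 I` indexed by the `xa i` coincide,
and the differences `e_{xa i} - e_{xa 0}` span a `(2n-1)`-dimensional subspace of the kernel. -/

theorem Matrix.card_sub_one_le_finrank_ker_toLin' {K m n ι : Type*} [Field K] [Fintype n]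
    [DecidableEq n] [Fintype ι] (M : Matrix m n K) {f : ι → n} (hf : Function.Injective f)
    (hcol : ∀ i j, M.col (f i) = M.col (f j)) :
    Fintype.card ι - 1 ≤ Module.finrank K (LinearMap.ker (Matrix.toLin' M)) := by
  classical
  rcases isEmpty_or_nonempty ι with _ | ⟨⟨i₀⟩⟩
  · simp
  let e : ι → n → K := fun i => Pi.single (f i) 1
  have he : LinearIndependent K fun i : {i // i ≠ i₀} => e i - e i₀ :=
    (affineIndependent_iff_linearIndependent_vsub K e i₀).1
      (((Pi.linearIndependent_single_one n K).comp f hf).affineIndependent K)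
  have hker (i : ι) : e i - e i₀ ∈ LinearMap.ker (Matrix.toLin' M) := by
    rw [LinearMap.mem_ker, Matrix.toLin'_apply, Matrix.mulVec_sub, Matrix.mulVec_single_one,
      Matrix.mulVec_single_one, hcol, sub_self]
  have hv : LinearIndependent K fun i : {i // i ≠ i₀} => (⟨_, hker i⟩ : LinearMap.ker _) :=
    LinearIndependent.of_comp (LinearMap.ker _).subtype he
  calc Fintype.card ι - 1 = Fintype.card {i // i ≠ i₀} := by simp [Fintype.card_subtype_compl]
    _ ≤ _ := hv.fintype_card_le_finrank

theorem somborMatrix_add_smul_one_col_eq {V : Type*} [DecidableEq V] (G : SimpleGraph V)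
    {x y : V} {d : ℕ} (hadj : G.Adj x y) (hx : sdeg G x = d) (hy : sdeg G y = d)
    (htwin : ∀ u, u ≠ x → u ≠ y → (G.Adj u x ↔ G.Adj u y)) :
    (somborMatrix G + ((d : ℝ) * Real.sqrt 2) • 1).col x =
      (somborMatrix G + ((d : ℝ) * Real.sqrt 2) • 1).col y := by
  have hsqrt : Real.sqrt ((d : ℝ) ^ 2 + (d : ℝ) ^ 2) = d * Real.sqrt 2 := by
    rw [← two_mul, Real.sqrt_mul zero_le_two, Real.sqrt_sq d.cast_nonneg, mul_comm]
  ext u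
  simp only [Matrix.col_apply, Matrix.add_apply, Matrix.smul_apply, somborMatrix, Matrix.of_apply,
    smul_eq_mul]
  by_cases hux : u = x
  · subst hux
    simp [hadj, hadj.ne, hx, hy, hsqrt]
  by_cases huy : u = y
  · subst huy
    simp [hadj.symm, hadj.ne', hx, hy, hsqrt]
  simp [Matrix.one_apply_ne hux, Matrix.one_apply_ne huy, hx, hy, htwin u hux huy]

def orderSuperPowerGraph (G : Type*) [Group G] : SimpleGraph G :=
  superGraph (powerGraph G) (orderRel G) (orderRel_equivalence G)

theorem orderSuperPowerGraph_adj_iff {G : Type*} [Group G] [Finite G] {x y : G} :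
    (orderSuperPowerGraph G).Adj x y ↔
      x ≠ y ∧ (orderOf x ∣ orderOf y ∨ orderOf y ∣ orderOf x) := by
  have adj_of_dvd (x y : G) (hne : x ≠ y) (h : orderOf x ∣ orderOf y) :
      (orderSuperPowerGraph G).Adj x y := by
    by_cases heq : orderOf x = orderOf y
    · exact ⟨hne, .inl heq⟩
    have hpow : orderOf (y ^ (orderOf y / orderOf x)) = orderOf x :=
      orderOf_pow_orderOf_div (orderOf_pos y).ne' h
    refine ⟨hne, .inr ⟨_, y, hpow.symm, rfl, fun h' => heq ?_, .inl ?_⟩⟩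
    · rw [← hpow, h']
    · exact Subgroup.pow_mem _ (Subgroup.mem_zpowers y) _
  constructor
  · rintro ⟨hne, h | ⟨x', y', hx, hy, -, hx' | hy'⟩⟩
    · exact ⟨hne, .inl h.dvd⟩
    · exact ⟨hne, .inl (hx ▸ hy ▸ orderOf_dvd_of_mem_zpowers hx')⟩
    · exact ⟨hne, .inr (hx ▸ hy ▸ orderOf_dvd_of_mem_zpowers hy')⟩
  · rintro ⟨hne, h | h⟩
    · exact adj_of_dvd x y hne h
    · exact (adj_of_dvd y x hne.symm h).symm

theorem ZMod.eq_zero_or_eq_of_add_self_eq_zero {n : ℕ} [NeZero n] {k : ZMod (2 * n)}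
    (h : k + k = 0) : k = 0 ∨ k = n := by
  have hdvd : 2 * n ∣ 2 * k.val := by
    rw [← ZMod.natCast_eq_zero_iff]
    push_cast
    simp only [ZMod.natCast_val, ZMod.cast_id', id_eq, two_mul, h]
  obtain ⟨c, hc⟩ := Nat.dvd_of_mul_dvd_mul_left two_pos hdvd
  have hc2 : c < 2 := Nat.lt_of_mul_lt_mul_left (a := n) (by linarith [k.val_lt])
  interval_cases c
  · exact .inl (ZMod.val_eq_zero k |>.1 (by omega))
  · exact .inr (by rw [← ZMod.natCast_zmod_val k, hc, mul_one])

namespace QuaternionGroup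

variable {n : ℕ} [NeZero n]

theorem orderOf_a_dvd (k : ZMod (2 * n)) : orderOf (a k) ∣ 2 * n := by
  rw [orderOf_a]
  exact Nat.div_dvd_of_dvd (Nat.gcd_dvd_left _ _)

theorem not_four_dvd_orderOf_a (hodd : Odd n) (k : ZMod (2 * n)) : ¬ 4 ∣ orderOf (a k) := by
  intro h
  have := h.trans (orderOf_a_dvd k)
  obtain ⟨m, rfl⟩ := hodd
  omega

theorem orderOf_a_dvd_four_iff (hodd : Odd n) {k : ZMod (2 * n)} :
    orderOf (a k) ∣ 4 ↔ k = 0 ∨ k = n := by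
  constructor
  · intro h
    have h2 : orderOf (a k) ∣ 2 := by
      have := Nat.le_of_dvd four_pos h
      have := not_four_dvd_orderOf_a hodd k
      have := orderOf_pos (a k)
      interval_cases orderOf (a k) <;> simp_all
    have hsq := orderOf_dvd_iff_pow_eq_one.1 h2
    rw [sq, a_mul_a, ← a_zero, a.injEq] at hsq
    exact ZMod.eq_zero_or_eq_of_add_self_eq_zero hsq
  · rintro (rfl | rfl)
    · simp [a_zero]
    · rw [← xa_sq 0]
      exact (orderOf_pow_dvd 2).trans (orderOf_xa 0).dvd

theorem four_dvd_orderOf_or_orderOf_dvd_four_iff (hodd : Odd n) (u : QuaternionGroup n) :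
    (4 ∣ orderOf u ∨ orderOf u ∣ 4) ↔ u ∈ ({a 0, a n} ∪ Set.range xa : Set _) := by
  cases u with
  | a k => simp [orderOf_a_dvd_four_iff hodd, not_four_dvd_orderOf_a hodd, -a_zero]
  | xa i => simp [orderOf_xa]

theorem sdeg_orderSuperPowerGraph_xa (hodd : Odd n) (j : ZMod (2 * n)) :
    sdeg (orderSuperPowerGraph (QuaternionGroup n)) (xa j) = 2 * n + 1 := by
  have hN : {u | (orderSuperPowerGraph _).Adj (xa j) u} =
      ({a 0, a n} ∪ Set.range xa) \ {xa j} := by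
    ext u
    rw [Set.mem_ofPred_eq, orderSuperPowerGraph_adj_iff, orderOf_xa,
      four_dvd_orderOf_or_orderOf_dvd_four_iff hodd, Set.mem_sdiff, Set.mem_singleton_iff, ne_comm,
      and_comm]
  have hdisj : Disjoint ({a 0, a n} : Set (QuaternionGroup n)) (Set.range xa) := by
    rw [Set.disjoint_left]
    rintro x (rfl | rfl) ⟨m, hm⟩ <;> cases hm
  have ha : (a 0 : QuaternionGroup n) ≠ a n := by
    rw [ne_eq, a.injEq, eq_comm, ZMod.natCast_eq_zero_iff]
    exact Nat.not_dvd_of_pos_of_lt (NeZero.pos n) (by linarith [NeZero.pos n])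
  rw [sdeg, hN, Set.ncard_sdiff (by simp), Set.ncard_union_eq hdisj, Set.ncard_pair ha,
    Set.ncard_singleton, ← Set.image_univ, Set.ncard_image_of_injective _ fun _ _ => xa.inj,
    Set.ncard_univ, Nat.card_zmod]
  omega

theorem somborMatrix_add_smul_one_col_xa_eq (hodd : Odd n) (i j : ZMod (2 * n)) :
    (somborMatrix (orderSuperPowerGraph (QuaternionGroup n)) +
        ((2 * (n : ℝ) + 1) * Real.sqrt 2) • 1).col (xa i) =
      (somborMatrix (orderSuperPowerGraph (QuaternionGroup n)) +
        ((2 * (n : ℝ) + 1) * Real.sqrt 2) • 1).col (xa j) := by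
  rcases eq_or_ne i j with rfl | hij
  · rfl
  have hadj : (orderSuperPowerGraph (QuaternionGroup n)).Adj (xa i) (xa j) := by
    simp [orderSuperPowerGraph_adj_iff, orderOf_xa, hij]
  have htwin (u) (hui : u ≠ xa i) (huj : u ≠ xa j) :
      (orderSuperPowerGraph _).Adj u (xa i) ↔ (orderSuperPowerGraph _).Adj u (xa j) := by
    simp [orderSuperPowerGraph_adj_iff, orderOf_xa, hui, huj]
  have := somborMatrix_add_smul_one_col_eq _ hadj (sdeg_orderSuperPowerGraph_xa hodd i)
    (sdeg_orderSuperPowerGraph_xa hodd j) htwin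
  push_cast at this
  exact this

end QuaternionGroup

theorem stmt18_general (n : ℕ) [NeZero n] (hodd : Odd n) :
    2 * n - 1 ≤ Module.finrank ℝ (LinearMap.ker (Matrix.toLin'
      (somborMatrix (superGraph (powerGraph (QuaternionGroup n))
          (orderRel (QuaternionGroup n)) (orderRel_equivalence (QuaternionGroup n))) +
        ((2 * (n : ℝ) + 1) * Real.sqrt 2) •
          (1 : Matrix (QuaternionGroup n) (QuaternionGroup n) ℝ)))) :=
  calc 2 * n - 1 = Fintype.card (ZMod (2 * n)) - 1 := by rw [ZMod.card]
    _ ≤ _ := Matrix.card_sub_one_le_finrank_ker_toLin' _ (fun _ _ => QuaternionGroup.xa.inj)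
      (QuaternionGroup.somborMatrix_add_smul_one_col_xa_eq hodd)

theorem stmt18 (n : ℕ) [NeZero n] (hn : 3 ≤ n) (hodd : Odd n) :
    2 * n - 1 ≤ Module.finrank ℝ (LinearMap.ker (Matrix.toLin'
      (somborMatrix (superGraph (powerGraph (QuaternionGroup n))
          (orderRel (QuaternionGroup n)) (orderRel_equivalence (QuaternionGroup n))) +
        ((2 * (n : ℝ) + 1) * Real.sqrt 2) •
          (1 : Matrix (QuaternionGroup n) (QuaternionGroup n) ℝ)))) :=
  stmt18_general n hodd
end
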